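/- arXiv:1209.3082 — 5 statements merged into one kernel-verified Lean document; each statement's English description precedes it below -/
import Mathlib

section
/- For every n ≥ 1 there exists an involution Φ on the set of Type OC perfect matchings of [2n] (perfect matchings in which every arc (i,j) satisfies i ≤ n < j) such that for every such matching M and every k ≥ 1, cr_k(Φ(M)) = ne_k(M) and ne_k(Φ(M)) = cr_k(M); in particular Φ interchanges all refinements of crossing and nesting numbers. -/
/-- The set of arc endpoints of a collection of arcs. -/
def Endpoints (M : Finset (ℕ × ℕ)) : Finset ℕ := M.image Prod.fst ∪ M.image Prod.snd

/-- A partial matching of `[N] = {1,…,N}`: a set of arcs `(i,j)` with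
`1 ≤ i < j ≤ N` whose entries are pairwise disjoint. -/
def IsPartialMatching (N : ℕ) (M : Finset (ℕ × ℕ)) : Prop :=
  (∀ p ∈ M, 1 ≤ p.1 ∧ p.1 < p.2 ∧ p.2 ≤ N) ∧
  (∀ p ∈ M, ∀ q ∈ M, p ≠ q → p.1 ≠ q.1 ∧ p.1 ≠ q.2 ∧ p.2 ≠ q.1 ∧ p.2 ≠ q.2)

/-- A perfect matching of `[N]`: a partial matching whose arcs cover `{1,…,N}`. -/
def IsPerfectMatching (N : ℕ) (M : Finset (ℕ × ℕ)) : Prop :=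
  IsPartialMatching N M ∧ Endpoints M = Finset.Icc 1 N

/-- `A` is a `k`-crossing of `M`: a `k`-element subset of arcs listable as
`(i₁,j₁),…,(i_k,j_k)` with `i₁ < ⋯ < i_k < j₁ < ⋯ < j_k`. -/
def IsCrossing (k : ℕ) (M A : Finset (ℕ × ℕ)) : Prop :=
  A ⊆ M ∧ A.card = k ∧ (∀ p ∈ A, ∀ q ∈ A, p.1 < q.1 → p.2 < q.2) ∧
    (∀ p ∈ A, ∀ q ∈ A, p.1 < q.2)

/-- `A` is a `k`-nesting of `M`: a `k`-element subset of arcs listable as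
`(i₁,j₁),…,(i_k,j_k)` with `i₁ < ⋯ < i_k < j_k < ⋯ < j₁`. -/
def IsNesting (k : ℕ) (M A : Finset (ℕ × ℕ)) : Prop :=
  A ⊆ M ∧ A.card = k ∧ (∀ p ∈ A, ∀ q ∈ A, p.1 < q.1 → q.2 < p.2)

/-- `crNum k M` : the number of `k`-crossings of `M`. -/
noncomputable def crNum (k : ℕ) (M : Finset (ℕ × ℕ)) : ℕ :=
  Nat.card {A : Finset (ℕ × ℕ) // IsCrossing k M A}

/-- `neNum k M` : the number of `k`-nestings of `M`. -/
noncomputable def neNum (k : ℕ) (M : Finset (ℕ × ℕ)) : ℕ :=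
  Nat.card {A : Finset (ℕ × ℕ) // IsNesting k M A}

/-- A Type OC perfect matching of `[2n]`: every arc `(i,j)` has `i ≤ n < j`. -/
def TypeOCMatching (n : ℕ) (M : Finset (ℕ × ℕ)) : Prop :=
  IsPerfectMatching (2 * n) M ∧ ∀ p ∈ M, p.1 ≤ n ∧ n < p.2

/-!
On a Type OC matching all openers precede all closers, so any two arcs either cross or nest,
according to whether their closers come in the same or the opposite order as their openers.
Reversing the block of closers, `j ↦ 3n + 1 - j`, while keeping the openers fixed is therefore an
involution that turns every `k`-nesting into a `k`-crossing and vice versa.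
-/

open Finset

lemma Finset.eq_of_union_eq_union_of_disjoint {α : Type*} [DecidableEq α] {A B X Y : Finset α}
    (hA : A ⊆ X) (hB : B ⊆ Y) (hXY : Disjoint X Y) (h : A ∪ B = X ∪ Y) : A = X := by
  refine hA.antisymm fun x hx => ?_
  have hx' : x ∈ A ∪ B := h ▸ mem_union_left Y hx
  exact (mem_union.1 hx').resolve_right fun hxB => disjoint_left.1 hXY hx (hB hxB)

lemma Nat.image_add_sub_Icc (a b : ℕ) : (Icc a b).image (a + b - ·) = Icc a b := by
  ext m
  simp only [mem_image, mem_Icc]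
  exact ⟨by rintro ⟨j, hj, rfl⟩; omega, fun hm => ⟨a + b - m, by omega, by omega⟩⟩

lemma typeOCMatching_iff {n : ℕ} {M : Finset (ℕ × ℕ)} :
    TypeOCMatching n M ↔ IsPartialMatching (2 * n) M ∧
      M.image Prod.fst = Icc 1 n ∧ M.image Prod.snd = Icc (n + 1) (2 * n) := by
  have hcover : Icc 1 n ∪ Icc (n + 1) (2 * n) = Icc 1 (2 * n) := by
    ext m
    simp only [mem_union, mem_Icc]
    omega
  constructor
  · rintro ⟨⟨hpart, hend⟩, hOC⟩
    have hfst : M.image Prod.fst ⊆ Icc 1 n := forall_mem_image.2 fun p hp =>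
      mem_Icc.2 ⟨(hpart.1 p hp).1, (hOC p hp).1⟩
    have hsnd : M.image Prod.snd ⊆ Icc (n + 1) (2 * n) := forall_mem_image.2 fun p hp =>
      mem_Icc.2 ⟨(hOC p hp).2, (hpart.1 p hp).2.2⟩
    have hdisj : Disjoint (Icc 1 n) (Icc (n + 1) (2 * n)) :=
      disjoint_left.2 fun m hm hm' => by simp only [mem_Icc] at hm hm'; omega
    rw [Endpoints, ← hcover] at hend
    refine ⟨hpart, eq_of_union_eq_union_of_disjoint hfst hsnd hdisj hend, ?_⟩
    rw [union_comm, union_comm (Icc 1 n)] at hend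
    exact eq_of_union_eq_union_of_disjoint hsnd hfst hdisj.symm hend
  · rintro ⟨hpart, hfst, hsnd⟩
    refine ⟨⟨hpart, by rw [Endpoints, hfst, hsnd, hcover]⟩, fun p hp => ?_⟩
    have h1 : p.1 ∈ Icc 1 n := hfst ▸ mem_image_of_mem _ hp
    have h2 : p.2 ∈ Icc (n + 1) (2 * n) := hsnd ▸ mem_image_of_mem _ hp
    simp only [mem_Icc] at h1 h2
    omega

def IsOCArc (n : ℕ) (p : ℕ × ℕ) : Prop := p.1 ≤ n ∧ n < p.2 ∧ p.2 ≤ 2 * n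

def reflectCloser (n : ℕ) (p : ℕ × ℕ) : ℕ × ℕ := (p.1, 3 * n + 1 - p.2)

section reflectCloser

variable {n k : ℕ} {p q : ℕ × ℕ} {M A : Finset (ℕ × ℕ)}

lemma TypeOCMatching.isOCArc (h : TypeOCMatching n M) : ∀ p ∈ M, IsOCArc n p :=
  fun p hp => ⟨(h.2 p hp).1, (h.2 p hp).2, (h.1.1.1 p hp).2.2⟩

lemma IsOCArc.reflectCloser (hp : IsOCArc n p) : IsOCArc n (reflectCloser n p) := by
  unfold IsOCArc _root_.reflectCloser at *
  omega

lemma reflectCloser_reflectCloser (hp : IsOCArc n p) :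
    reflectCloser n (reflectCloser n p) = p := by
  unfold IsOCArc reflectCloser at *
  ext
  · rfl
  · dsimp only
    omega

lemma reflectCloser_snd_lt_reflectCloser_snd (hp : IsOCArc n p) (hq : IsOCArc n q) :
    (reflectCloser n p).2 < (reflectCloser n q).2 ↔ q.2 < p.2 := by
  unfold IsOCArc reflectCloser at *
  omega

lemma injOn_reflectCloser (hA : ∀ p ∈ A, IsOCArc n p) : Set.InjOn (reflectCloser n) A :=
  Set.LeftInvOn.injOn (f₁' := reflectCloser n) fun p hp => reflectCloser_reflectCloser (hA p hp)

lemma image_reflectCloser_image_reflectCloser (hM : ∀ p ∈ M, IsOCArc n p) :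
    (M.image (reflectCloser n)).image (reflectCloser n) = M := by
  rw [image_image]
  exact (image_congr fun p hp => reflectCloser_reflectCloser (hM p hp)).trans image_id

lemma forall_mem_image_reflectCloser_isOCArc (hM : ∀ p ∈ M, IsOCArc n p) :
    ∀ p ∈ M.image (reflectCloser n), IsOCArc n p :=
  forall_mem_image.2 fun p hp => (hM p hp).reflectCloser

lemma isCrossing_image_reflectCloser (hM : ∀ p ∈ M, IsOCArc n p) (hA : IsNesting k M A) :
    IsCrossing k (M.image (reflectCloser n)) (A.image (reflectCloser n)) := by
  obtain ⟨hAM, hcard, hnest⟩ := hA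
  have hA : ∀ p ∈ A, IsOCArc n p := fun p hp => hM p (hAM hp)
  refine ⟨image_subset_image hAM, (card_image_of_injOn (injOn_reflectCloser hA)).trans hcard,
    forall_mem_image.2 fun p hp => forall_mem_image.2 fun q hq hlt => ?_,
    forall_mem_image.2 fun p hp => forall_mem_image.2 fun q hq => ?_⟩
  · exact (reflectCloser_snd_lt_reflectCloser_snd (hA p hp) (hA q hq)).2 (hnest p hp q hq hlt)
  · exact (hA p hp).1.trans_lt (hA q hq).reflectCloser.2.1

lemma isNesting_image_reflectCloser (hM : ∀ p ∈ M, IsOCArc n p) (hA : IsCrossing k M A) :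
    IsNesting k (M.image (reflectCloser n)) (A.image (reflectCloser n)) := by
  obtain ⟨hAM, hcard, hcross, -⟩ := hA
  have hA : ∀ p ∈ A, IsOCArc n p := fun p hp => hM p (hAM hp)
  refine ⟨image_subset_image hAM, (card_image_of_injOn (injOn_reflectCloser hA)).trans hcard,
    forall_mem_image.2 fun p hp => forall_mem_image.2 fun q hq hlt => ?_⟩
  exact (reflectCloser_snd_lt_reflectCloser_snd (hA q hq) (hA p hp)).2 (hcross p hp q hq hlt)

lemma crNum_image_reflectCloser (hM : ∀ p ∈ M, IsOCArc n p) (k : ℕ) :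
    crNum k (M.image (reflectCloser n)) = neNum k M := by
  have hM' := forall_mem_image_reflectCloser_isOCArc hM
  refine Nat.card_congr
    { toFun := fun B => ⟨B.1.image (reflectCloser n), ?_⟩
      invFun := fun A => ⟨A.1.image (reflectCloser n), isCrossing_image_reflectCloser hM A.2⟩
      left_inv := fun B => Subtype.ext <|
        image_reflectCloser_image_reflectCloser fun p hp => hM' p (B.2.1 hp)
      right_inv := fun A => Subtype.ext <|
        image_reflectCloser_image_reflectCloser fun p hp => hM p (A.2.1 hp) }
  simpa only [image_reflectCloser_image_reflectCloser hM] using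
    isNesting_image_reflectCloser hM' B.2

lemma TypeOCMatching.image_reflectCloser (h : TypeOCMatching n M) :
    TypeOCMatching n (M.image (reflectCloser n)) := by
  have hOC := h.isOCArc
  obtain ⟨⟨hbound, hdisj⟩, hfst, hsnd⟩ := typeOCMatching_iff.1 h
  refine typeOCMatching_iff.2 ⟨⟨forall_mem_image.2 fun p hp => ?_,
    forall_mem_image.2 fun p hp => forall_mem_image.2 fun q hq hpq => ?_⟩, ?_, ?_⟩
  · have := (hbound p hp).1
    have := hOC p hp
    unfold IsOCArc reflectCloser at *
    dsimp only
    omega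
  · have hd := hdisj p hp q hq fun hpq' => hpq (congrArg _ hpq')
    have := hOC p hp
    have := hOC q hq
    unfold IsOCArc reflectCloser at *
    dsimp only
    omega
  · rw [image_image]
    exact hfst
  · rw [image_image, show Prod.snd ∘ reflectCloser n = (3 * n + 1 - ·) ∘ Prod.snd from rfl,
      ← image_image, hsnd]
    convert Nat.image_add_sub_Icc (n + 1) (2 * n) using 3
    omega

end reflectCloser

theorem stmt1_general (n : ℕ) :
    ∃ Φ : Finset (ℕ × ℕ) → Finset (ℕ × ℕ),
      (∀ M, TypeOCMatching n M → TypeOCMatching n (Φ M)) ∧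
      (∀ M, TypeOCMatching n M → Φ (Φ M) = M) ∧
      (∀ M, TypeOCMatching n M → ∀ k, 1 ≤ k →
        crNum k (Φ M) = neNum k M ∧ neNum k (Φ M) = crNum k M) := by
  refine ⟨fun M => M.image (reflectCloser n), fun M hM => hM.image_reflectCloser,
    fun M hM => image_reflectCloser_image_reflectCloser hM.isOCArc, fun M hM k _ => ?_⟩
  have hne := crNum_image_reflectCloser (forall_mem_image_reflectCloser_isOCArc hM.isOCArc) k
  rw [image_reflectCloser_image_reflectCloser hM.isOCArc] at hne
  exact ⟨crNum_image_reflectCloser hM.isOCArc k, hne.symm⟩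

theorem stmt1 (n : ℕ) (hn : 1 ≤ n) :
    ∃ Φ : Finset (ℕ × ℕ) → Finset (ℕ × ℕ),
      (∀ M, TypeOCMatching n M → TypeOCMatching n (Φ M)) ∧
      (∀ M, TypeOCMatching n M → Φ (Φ M) = M) ∧
      (∀ M, TypeOCMatching n M → ∀ k, 1 ≤ k →
        crNum k (Φ M) = neNum k M ∧ neNum k (Φ M) = crNum k M) :=
  stmt1_general n
end

section
/- Let N ≥ 1 and let D ⊆ {1,…,N} be a set of 2n elements (the prescribed arc endpoints). Let 𝒮(D) be the set of partial matchings of [N] whose set of arc endpoints is exactly D and in which every opener (smaller entry of an arc) is less than every closer (larger entry of an arc) — equivalently, the arcs pair the n smallest elements of D with the n largest. Then there exists an involution Φ on 𝒮(D) (in particular Φ preserves the sets of openers, closers and fixed points) such that for every M ∈ 𝒮(D) and every k ≥ 1, cr_k(Φ(M)) = ne_k(M) and ne_k(Φ(M)) = cr_k(M). -/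
/-- The family `𝒮(D)`: partial matchings of `[N]` whose arc endpoints are exactly `D`
and in which every opener is less than every closer. -/
def OCWithEndpoints (N : ℕ) (D : Finset ℕ) (M : Finset (ℕ × ℕ)) : Prop :=
  IsPartialMatching N M ∧ Endpoints M = D ∧ ∀ p ∈ M, ∀ q ∈ M, p.1 < q.2

/-- The `i`-th smallest element of `s` goes to the `i`-th largest; fixing the points outside `s`
makes `revWithin s` an involution of the whole type. -/
noncomputable def revWithin {α : Type*} [LinearOrder α] (s : Finset α) (x : α) : α :=
  if hx : x ∈ s then s.orderIsoOfFin rfl (Fin.rev ((s.orderIsoOfFin rfl).symm ⟨x, hx⟩)) else x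

section revWithin

variable {α : Type*} [LinearOrder α] (s : Finset α)

theorem revWithin_coe (y : s) :
    revWithin s y = s.orderIsoOfFin rfl (Fin.rev ((s.orderIsoOfFin rfl).symm y)) := by
  rw [revWithin, dif_pos y.2]

theorem revWithin_mem {x : α} (hx : x ∈ s) : revWithin s x ∈ s :=
  revWithin_coe s ⟨x, hx⟩ ▸ Subtype.prop _

theorem revWithin_of_notMem {x : α} (hx : x ∉ s) : revWithin s x = x :=
  dif_neg hx

theorem revWithin_involutive : Function.Involutive (revWithin s) := by
  intro x
  by_cases hx : x ∈ s
  · rw [revWithin_coe s ⟨x, hx⟩, revWithin_coe, OrderIso.symm_apply_apply, Fin.rev_rev,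
      OrderIso.apply_symm_apply]
  · rw [revWithin_of_notMem s hx, revWithin_of_notMem s hx]

theorem revWithin_strictAntiOn : StrictAntiOn (revWithin s) s := by
  intro x hx y hy hxy
  rw [revWithin_coe s ⟨x, hx⟩, revWithin_coe s ⟨y, hy⟩, Subtype.coe_lt_coe, OrderIso.lt_iff_lt,
    Fin.rev_lt_rev, OrderIso.lt_iff_lt]
  exact hxy

theorem image_revWithin : s.image (revWithin s) = s := by
  refine Finset.Subset.antisymm (fun x hx => ?_) (fun x hx => ?_)
  · obtain ⟨y, hy, rfl⟩ := Finset.mem_image.mp hx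
    exact revWithin_mem s hy
  · exact Finset.mem_image.mpr ⟨_, revWithin_mem s hx, revWithin_involutive s x⟩

end revWithin

noncomputable def reverseClosers (M : Finset (ℕ × ℕ)) : ℕ × ℕ → ℕ × ℕ :=
  Prod.map id (revWithin (M.image Prod.snd))

noncomputable def closerReversal (M : Finset (ℕ × ℕ)) : Finset (ℕ × ℕ) :=
  M.image (reverseClosers M)

def OpenersPrecedeClosers (M : Finset (ℕ × ℕ)) : Prop :=
  ∀ p ∈ M, ∀ q ∈ M, p.1 < q.2

section closerReversal

variable {M : Finset (ℕ × ℕ)}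

@[simp]
theorem reverseClosers_apply (M : Finset (ℕ × ℕ)) (p : ℕ × ℕ) :
    reverseClosers M p = (p.1, revWithin (M.image Prod.snd) p.2) :=
  rfl

theorem reverseClosers_involutive (M : Finset (ℕ × ℕ)) : Function.Involutive (reverseClosers M) :=
  Function.Involutive.prodMap (fun _ => rfl) (revWithin_involutive _)

theorem image_fst_closerReversal (M : Finset (ℕ × ℕ)) :
    (closerReversal M).image Prod.fst = M.image Prod.fst := by
  rw [closerReversal, Finset.image_image]
  rfl

theorem image_snd_closerReversal (M : Finset (ℕ × ℕ)) :
    (closerReversal M).image Prod.snd = M.image Prod.snd := by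
  rw [closerReversal, Finset.image_image]
  exact (Finset.image_image (f := Prod.snd)).symm.trans (image_revWithin _)

theorem closerReversal_closerReversal (M : Finset (ℕ × ℕ)) :
    closerReversal (closerReversal M) = M := by
  have hsame : reverseClosers (closerReversal M) = reverseClosers M := by
    rw [reverseClosers, reverseClosers, image_snd_closerReversal]
  rw [closerReversal, hsame, closerReversal, Finset.image_image,
    (reverseClosers_involutive M).comp_self, Finset.image_id]

theorem fst_lt_revWithin_snd (hM : OpenersPrecedeClosers M) {p q : ℕ × ℕ} (hp : p ∈ M)
    (hq : q ∈ M) : p.1 < revWithin (M.image Prod.snd) q.2 := by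
  obtain ⟨r, hr, hrq⟩ :=
    Finset.mem_image.mp (revWithin_mem _ (Finset.mem_image_of_mem Prod.snd hq))
  exact hrq ▸ hM p hp r hr

theorem openersPrecedeClosers_closerReversal (hM : OpenersPrecedeClosers M) :
    OpenersPrecedeClosers (closerReversal M) := by
  simp only [OpenersPrecedeClosers, closerReversal, Finset.forall_mem_image, reverseClosers_apply]
  exact fun p hp q hq => fst_lt_revWithin_snd hM hp hq

theorem isPartialMatching_closerReversal {N : ℕ} (hM : IsPartialMatching N M)
    (hOC : OpenersPrecedeClosers M) : IsPartialMatching N (closerReversal M) := by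
  obtain ⟨hbound, hdisj⟩ := hM
  simp only [IsPartialMatching, closerReversal, Finset.forall_mem_image, reverseClosers_apply]
  refine ⟨fun p hp => ?_, fun p hp q hq hne => ?_⟩
  · obtain ⟨q, hq, hqp⟩ :=
      Finset.mem_image.mp (revWithin_mem _ (Finset.mem_image_of_mem Prod.snd hp))
    exact ⟨(hbound p hp).1, fst_lt_revWithin_snd hOC hp hp, hqp ▸ (hbound q hq).2.2⟩
  · obtain ⟨h11, -, -, h22⟩ := hdisj p hp q hq (fun h => hne (h ▸ rfl))
    exact ⟨h11, (fst_lt_revWithin_snd hOC hp hq).ne, (fst_lt_revWithin_snd hOC hq hp).ne',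
      fun h => h22 ((revWithin_involutive _).injective h)⟩

theorem OCWithEndpoints.closerReversal {N : ℕ} {D : Finset ℕ} (h : OCWithEndpoints N D M) :
    OCWithEndpoints N D (closerReversal M) :=
  ⟨isPartialMatching_closerReversal h.1 h.2.2,
    by rw [Endpoints, image_fst_closerReversal, image_snd_closerReversal, ← Endpoints, h.2.1],
    openersPrecedeClosers_closerReversal h.2.2⟩

theorem isNesting_iff_isCrossing_image (hM : OpenersPrecedeClosers M) (k : ℕ)
    (A : Finset (ℕ × ℕ)) :
    IsNesting k M A ↔ IsCrossing k (closerReversal M) (A.image (reverseClosers M)) := by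
  have hinj := (reverseClosers_involutive M).injective
  simp only [IsNesting, IsCrossing, closerReversal, Finset.image_subset_image_iff hinj,
    Finset.card_image_of_injective _ hinj, Finset.forall_mem_image, reverseClosers_apply]
  refine and_congr_right fun hA => and_congr_right fun _ => ?_
  rw [and_iff_left fun p hp q hq => fst_lt_revWithin_snd hM (hA hp) (hA hq)]
  have hsnd : ∀ p ∈ A, p.2 ∈ M.image Prod.snd := fun p hp => Finset.mem_image_of_mem _ (hA hp)
  exact forall₂_congr fun p hp => forall₂_congr fun q hq => imp_congr_right fun _ =>
    ((revWithin_strictAntiOn _).lt_iff_gt (hsnd p hp) (hsnd q hq)).symm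

theorem crNum_closerReversal (hM : OpenersPrecedeClosers M) (k : ℕ) :
    crNum k (closerReversal M) = neNum k M :=
  Nat.card_congr (((reverseClosers_involutive M).toPerm).finsetCongr.subtypeEquiv
    fun A => by
      rw [Equiv.finsetCongr_apply, Finset.map_eq_image]
      exact isNesting_iff_isCrossing_image hM k A).symm

theorem neNum_closerReversal (hM : OpenersPrecedeClosers M) (k : ℕ) :
    neNum k (closerReversal M) = crNum k M := by
  simpa only [closerReversal_closerReversal] using
    (crNum_closerReversal (openersPrecedeClosers_closerReversal hM) k).symm

end closerReversal

theorem stmt3_general (N : ℕ) (D : Finset ℕ) :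
    ∃ Φ : Finset (ℕ × ℕ) → Finset (ℕ × ℕ),
      (∀ M, OCWithEndpoints N D M → OCWithEndpoints N D (Φ M)) ∧
      (∀ M, OCWithEndpoints N D M → Φ (Φ M) = M) ∧
      (∀ M, OCWithEndpoints N D M →
        (Φ M).image Prod.fst = M.image Prod.fst ∧
        (Φ M).image Prod.snd = M.image Prod.snd) ∧
      (∀ M, OCWithEndpoints N D M → ∀ k, 1 ≤ k →
        crNum k (Φ M) = neNum k M ∧ neNum k (Φ M) = crNum k M) :=
  ⟨closerReversal, fun _ h => h.closerReversal, fun M _ => closerReversal_closerReversal M,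
    fun M _ => ⟨image_fst_closerReversal M, image_snd_closerReversal M⟩,
    fun _ h k _ => ⟨crNum_closerReversal h.2.2 k, neNum_closerReversal h.2.2 k⟩⟩

theorem stmt3 (N n : ℕ) (hN : 1 ≤ N) (D : Finset ℕ) (hD : D ⊆ Finset.Icc 1 N)
    (hcard : D.card = 2 * n) :
    ∃ Φ : Finset (ℕ × ℕ) → Finset (ℕ × ℕ),
      (∀ M, OCWithEndpoints N D M → OCWithEndpoints N D (Φ M)) ∧
      (∀ M, OCWithEndpoints N D M → Φ (Φ M) = M) ∧
      (∀ M, OCWithEndpoints N D M →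
        (Φ M).image Prod.fst = M.image Prod.fst ∧
        (Φ M).image Prod.snd = M.image Prod.snd) ∧
      (∀ M, OCWithEndpoints N D M → ∀ k, 1 ≤ k →
        crNum k (Φ M) = neNum k M ∧ neNum k (Φ M) = crNum k M) :=
  stmt3_general N D
end

section
/- For every n and all finitely supported sequences (a_k)_{k≥2}, (b_k)_{k≥2}, (c_k)_{k≥2}, (d_k)_{k≥2} of natural numbers, the number of Type OC permutations σ of {1,…,n} with nu_k(σ) = a_k, cu_k(σ) = b_k, nl_k(σ) = c_k and cl_k(σ) = d_k for all k ≥ 2 equals the number of Type OC permutations σ of {1,…,n} with nu_k(σ) = b_k, cu_k(σ) = a_k, nl_k(σ) = d_k and cl_k(σ) = c_k for all k ≥ 2. That is, on Type OC permutations the joint distribution of all upper and lower crossing and nesting statistics is symmetric under simultaneously exchanging upper nestings with upper crossings and lower nestings with lower crossings. -/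
namespace Stmt5

variable {n : ℕ}

/-- `nu k σ` : the number of enhanced upper `k`-nestings of the permutation `σ`:
sets of `k` upper arcs with left endpoints `a₁ < ⋯ < a_k ≤ σ(a_k) < ⋯ < σ(a₁)`. -/
noncomputable def nu (k : ℕ) (σ : Equiv.Perm (Fin n)) : ℕ :=
  Nat.card {A : Finset (Fin n) // A.card = k ∧ (∀ a ∈ A, a ≤ σ a) ∧
    ∀ a ∈ A, ∀ b ∈ A, a < b → σ b < σ a}

/-- `cu k σ` : the number of enhanced upper `k`-crossings of `σ`:
sets of `k` upper arcs with left endpoints `a₁ < ⋯ < a_k ≤ σ(a₁) < ⋯ < σ(a_k)`. -/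
noncomputable def cu (k : ℕ) (σ : Equiv.Perm (Fin n)) : ℕ :=
  Nat.card {A : Finset (Fin n) // A.card = k ∧ (∀ a ∈ A, a ≤ σ a) ∧
    (∀ a ∈ A, ∀ b ∈ A, a < b → σ a < σ b) ∧ ∀ a ∈ A, ∀ b ∈ A, a ≤ σ b}

/-- `nl k σ` : the number of lower `k`-nestings of `σ`: sets of `k` lower arcs
`(σ(b), b)` forming the pattern `i₁ < ⋯ < i_k < j_k < ⋯ < j₁`. -/
noncomputable def nl (k : ℕ) (σ : Equiv.Perm (Fin n)) : ℕ :=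
  Nat.card {B : Finset (Fin n) // B.card = k ∧ (∀ b ∈ B, σ b < b) ∧
    ∀ a ∈ B, ∀ b ∈ B, σ a < σ b → b < a}

/-- `cl k σ` : the number of lower `k`-crossings of `σ`: sets of `k` lower arcs
`(σ(b), b)` forming the pattern `i₁ < ⋯ < i_k < j₁ < ⋯ < j_k`. -/
noncomputable def cl (k : ℕ) (σ : Equiv.Perm (Fin n)) : ℕ :=
  Nat.card {B : Finset (Fin n) // B.card = k ∧ (∀ b ∈ B, σ b < b) ∧
    (∀ a ∈ B, ∀ b ∈ B, σ a < σ b → a < b) ∧ ∀ a ∈ B, ∀ b ∈ B, σ a < b}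

/-- `a` is an opener of `σ`. -/
def IsOpener (σ : Equiv.Perm (Fin n)) (a : Fin n) : Prop := a < σ a ∧ a < σ.symm a

/-- `a` is a closer of `σ`. -/
def IsCloser (σ : Equiv.Perm (Fin n)) (a : Fin n) : Prop := σ a < a ∧ σ.symm a < a

/-- `a` is a fixed point or an upper transitory of `σ`. -/
def IsSpecial (σ : Equiv.Perm (Fin n)) (a : Fin n) : Prop :=
  σ a = a ∨ (σ.symm a < a ∧ a < σ a)

/-- `a` is a lower transitory of `σ`. -/
def IsLowerTransitory (σ : Equiv.Perm (Fin n)) (a : Fin n) : Prop :=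
  σ a < a ∧ a < σ.symm a

/-- `m` is a cut of `σ`: `0 < m < n` and `σ` stabilises the first `m` positions. -/
def IsCut (σ : Equiv.Perm (Fin n)) (m : ℕ) : Prop :=
  0 < m ∧ m < n ∧ ∀ i : Fin n, i.val < m → (σ i).val < m

/-- `a` and `b` lie in the same indecomposable interval of `σ` (no cut separates them). -/
def SameInterval (σ : Equiv.Perm (Fin n)) (a b : Fin n) : Prop :=
  ∀ m, IsCut σ m → (a.val < m ↔ b.val < m)

/-- `σ` is of Type OC: no lower transitory, at most one fixed point or upper
transitory in each indecomposable interval, and within each indecomposable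
interval every opener precedes every fixed point or upper transitory, which in
turn precedes every closer. -/
def TypeOC (σ : Equiv.Perm (Fin n)) : Prop :=
  (∀ a, ¬ IsLowerTransitory σ a) ∧
  (∀ a b, IsSpecial σ a → IsSpecial σ b → SameInterval σ a b → a = b) ∧
  (∀ a b, SameInterval σ a b → IsOpener σ a → IsSpecial σ b → a < b) ∧
  (∀ a b, SameInterval σ a b → IsSpecial σ a → IsCloser σ b → a < b) ∧
  (∀ a b, SameInterval σ a b → IsOpener σ a → IsCloser σ b → a < b)

end Stmt5

/-!
Every crossing or nesting of `σ` lies inside one indecomposable interval. In such an interval of a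
Type OC permutation the upper arcs start at the openers and the special vertex, all of which lie to
the left of every closer, and the lower arcs end at the closers; hence any set of upper (or of
lower) arcs of one interval is automatically enhanced, and it is a crossing or a nesting according
as `σ` increases or decreases on its endpoints. Call the left endpoints of the upper arcs of an
interval, and the right endpoints of its lower arcs, the two cells of the interval, and let `ρ`
reverse the order inside every cell. Then `σ ∘ ρ` exchanges increasing and decreasing sets, has the
same cells and is again of Type OC, and `σ ↦ σ ∘ ρ` is an involution: it swaps `nu` with `cu` and
`nl` with `cl`.
-/

theorem Function.Injective.strictMonoOn_iff {α β : Type*} [LinearOrder α] [LinearOrder β]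
    {f : α → β} (hf : Function.Injective f) {s : Set α} :
    StrictMonoOn f s ↔ ∀ a ∈ s, ∀ b ∈ s, f a < f b → a < b :=
  ⟨fun h _ ha _ hb => (h.lt_iff_lt ha hb).mp, fun h a ha b hb hab =>
    (hf.ne hab.ne).lt_or_gt.resolve_right fun hba => (h b hb a ha hba).not_gt hab⟩

theorem Function.Injective.strictAntiOn_iff {α β : Type*} [LinearOrder α] [LinearOrder β]
    {f : α → β} (hf : Function.Injective f) {s : Set α} :
    StrictAntiOn f s ↔ ∀ a ∈ s, ∀ b ∈ s, f a < f b → b < a :=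
  ⟨fun h _ ha _ hb => (h.lt_iff_gt ha hb).mp, fun h a ha b hb hab =>
    (hf.ne hab.ne').lt_or_gt.resolve_right fun hab' => (h a ha b hb hab').not_gt hab⟩

theorem Function.Involutive.card_strictAntiOn_comp_eq {α β : Type*} [LinearOrder α] [Preorder β]
    {f : α → α} (hf : Function.Involutive f) (g : α → β) {P : Finset α → Prop}
    (hP : ∀ A, P A → P (A.image f)) (hanti : ∀ A, P A → StrictAntiOn f A) :
    Nat.card {A : Finset α // P A ∧ StrictAntiOn (g ∘ f) A} =
      Nat.card {A : Finset α // P A ∧ StrictMonoOn g A} := by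
  have himage (A : Finset α) : (A.image f).image f = A := by
    rw [Finset.image_image, hf.comp_self, Finset.image_id]
  have hmaps (A : Finset α) : Set.MapsTo f ↑(A.image f) A := by
    intro x hx
    obtain ⟨y, hy, rfl⟩ := Finset.mem_image.mp hx
    rwa [hf y]
  refine Nat.card_congr
    { toFun := fun A => ⟨A.1.image f, hP _ A.2.1, ?_⟩
      invFun := fun B => ⟨B.1.image f, hP _ B.2.1, ?_⟩
      left_inv := fun A => Subtype.ext (himage A.1)
      right_inv := fun B => Subtype.ext (himage B.1) }
  · simpa only [Function.comp_assoc, hf.comp_self, Function.comp_id] using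
      A.2.2.comp (hanti _ (hP _ A.2.1)) (hmaps A.1)
  · exact B.2.2.comp_strictAntiOn (hanti _ (hP _ B.2.1)) (hmaps B.1)

namespace Finset

variable {α : Type*} [LinearOrder α] {T : Finset α} {x : α}

noncomputable def reflect (T : Finset α) (x : α) : α :=
  if h : x ∈ T then T.orderIsoOfFin rfl ((T.orderIsoOfFin rfl).symm ⟨x, h⟩).rev else x

theorem reflect_of_mem (h : x ∈ T) :
    T.reflect x = T.orderIsoOfFin rfl ((T.orderIsoOfFin rfl).symm ⟨x, h⟩).rev :=
  dif_pos h

theorem reflect_mem (h : x ∈ T) : T.reflect x ∈ T := by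
  rw [reflect_of_mem h]
  exact coe_mem _

theorem reflect_reflect (h : x ∈ T) : T.reflect (T.reflect x) = x := by
  have hsub : (⟨T.reflect x, reflect_mem h⟩ : T) =
      T.orderIsoOfFin rfl ((T.orderIsoOfFin rfl).symm ⟨x, h⟩).rev :=
    Subtype.ext (reflect_of_mem h)
  rw [reflect_of_mem (reflect_mem h), hsub, OrderIso.symm_apply_apply, Fin.rev_rev,
    OrderIso.apply_symm_apply]

theorem strictAntiOn_reflect (T : Finset α) : StrictAntiOn T.reflect T := by
  intro x hx y hy hxy
  rw [reflect_of_mem hx, reflect_of_mem hy]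
  exact (T.orderIsoOfFin rfl).strictMono <| Fin.rev_lt_rev.mpr <|
    (T.orderIsoOfFin rfl).symm.strictMono (Subtype.mk_lt_mk.mpr hxy)

end Finset

namespace Stmt5

open Equiv Function

variable {n : ℕ} {σ τ : Perm (Fin n)} {A : Finset (Fin n)} {a b x y z : Fin n} {m : ℕ}

theorem IsCut.apply_lt_iff (h : IsCut σ m) (x : Fin n) : (σ x).val < m ↔ x.val < m := by
  refine ⟨fun hx => ?_, h.2.2 x⟩
  have hsymm : Set.MapsTo σ.symm {i : Fin n | i.val < m} {i | i.val < m} :=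
    Perm.perm_symm_mapsTo_of_mapsTo σ fun i => h.2.2 i
  simpa using hsymm (show (σ x).val < m from hx)

namespace SameInterval

@[refl]
theorem refl (σ : Perm (Fin n)) (x : Fin n) : SameInterval σ x x := fun _ _ => Iff.rfl

theorem symm (h : SameInterval σ x y) : SameInterval σ y x := fun m hm => (h m hm).symm

theorem trans (h : SameInterval σ x y) (h' : SameInterval σ y z) : SameInterval σ x z :=
  fun m hm => (h m hm).trans (h' m hm)

/-- A cut between `a ≤ b` would also separate `u` from `v`. -/
theorem of_le_of_le {u v : Fin n} (hu : SameInterval σ a u) (hv : SameInterval σ b v)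
    (hab : a ≤ b) (hvu : v ≤ u) : SameInterval σ a b := by
  intro m hm
  rw [Fin.le_def] at hab hvu
  exact ⟨fun ha => (hv m hm).mpr (hvu.trans_lt ((hu m hm).mp ha)), hab.trans_lt⟩

end SameInterval

theorem sameInterval_apply (σ : Perm (Fin n)) (x : Fin n) : SameInterval σ x (σ x) :=
  fun _ hm => (hm.apply_lt_iff x).symm

theorem isSpecial_iff : IsSpecial σ a ↔ a ≤ σ a ∧ σ.symm a ≤ a := by
  constructor
  · rintro (h | ⟨h₁, h₂⟩)
    · exact ⟨h.ge, (σ.symm_apply_eq.mpr h.symm).le⟩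
    · exact ⟨h₂.le, h₁.le⟩
  · rintro ⟨h₁, h₂⟩
    rcases h₁.eq_or_lt with h | h
    · exact Or.inl h.symm
    · exact Or.inr ⟨h₂.lt_of_ne fun he => h.ne (σ.symm_apply_eq.mp he), h⟩

theorem isLowerTransitory_iff : IsLowerTransitory σ a ↔ ¬ a ≤ σ a ∧ ¬ σ.symm a ≤ a := by
  simp only [IsLowerTransitory, not_le]

theorem isOpener_iff (h : ¬ IsLowerTransitory σ a) : IsOpener σ a ↔ ¬ σ.symm a ≤ a := by
  refine ⟨fun ho => not_le.mpr ho.2, fun hR => ?_⟩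
  rw [isLowerTransitory_iff, not_and, not_not] at h
  have hL : a ≤ σ a := by_contra fun hL => hR (h hL)
  exact ⟨hL.lt_of_ne fun he => hR (σ.symm_apply_eq.mpr he).le, not_le.mp hR⟩

theorem isCloser_iff (h : ¬ IsLowerTransitory σ a) : IsCloser σ a ↔ ¬ a ≤ σ a := by
  refine ⟨fun hc => not_le.mpr hc.1, fun hL => ⟨not_le.mp hL, ?_⟩⟩
  rw [isLowerTransitory_iff, not_and, not_not] at h
  exact (h hL).lt_of_ne fun he => hL (σ.symm_apply_eq.mp he).le

/-- Type OC is a condition on the cuts and on the two relations `a ≤ σ a` and `σ⁻¹ a ≤ a`. -/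
theorem TypeOC.of_iff (hσ : TypeOC σ) (hI : ∀ x y, SameInterval τ x y ↔ SameInterval σ x y)
    (hL : ∀ x, x ≤ τ x ↔ x ≤ σ x) (hR : ∀ x, τ.symm x ≤ x ↔ σ.symm x ≤ x) : TypeOC τ := by
  obtain ⟨hLT, hSS, hOS, hSC, hOC⟩ := hσ
  have hLT' (a : Fin n) : ¬ IsLowerTransitory τ a := by
    rw [isLowerTransitory_iff, hL, hR, ← isLowerTransitory_iff]
    exact hLT a
  have hO (a : Fin n) : IsOpener τ a ↔ IsOpener σ a := by
    rw [isOpener_iff (hLT' a), isOpener_iff (hLT a), hR]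
  have hS (a : Fin n) : IsSpecial τ a ↔ IsSpecial σ a := by
    rw [isSpecial_iff, isSpecial_iff, hL, hR]
  have hC (a : Fin n) : IsCloser τ a ↔ IsCloser σ a := by
    rw [isCloser_iff (hLT' a), isCloser_iff (hLT a), hL]
  refine ⟨hLT', ?_, ?_, ?_, ?_⟩ <;> simp only [hI, hO, hS, hC] <;> assumption

namespace TypeOC

theorem le_or_symm_le (hσ : TypeOC σ) (x : Fin n) : x ≤ σ x ∨ σ.symm x ≤ x := by
  have h := hσ.1 x
  rw [isLowerTransitory_iff] at h
  tauto

theorem apply_le_apply_apply (hσ : TypeOC σ) (h : σ x < x) : σ x ≤ σ (σ x) :=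
  (hσ.le_or_symm_le (σ x)).resolve_right (by rw [symm_apply_apply]; exact not_le.mpr h)

theorem le_of_sameInterval (hσ : TypeOC σ) (hxz : SameInterval σ x z) (hx : x ≤ σ x)
    (hz : σ.symm z ≤ z) : x ≤ z := by
  obtain ⟨hLT, hSS, hOS, hSC, hOC⟩ := hσ
  by_cases hRx : σ.symm x ≤ x <;> by_cases hLz : z ≤ σ z
  · exact (hSS x z (isSpecial_iff.mpr ⟨hx, hRx⟩) (isSpecial_iff.mpr ⟨hLz, hz⟩) hxz).le
  · exact (hSC x z hxz (isSpecial_iff.mpr ⟨hx, hRx⟩) ((isCloser_iff (hLT z)).mpr hLz)).le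
  · exact (hOS x z hxz ((isOpener_iff (hLT x)).mpr hRx) (isSpecial_iff.mpr ⟨hLz, hz⟩)).le
  · exact (hOC x z hxz ((isOpener_iff (hLT x)).mpr hRx) ((isCloser_iff (hLT z)).mpr hLz)).le

theorem lt_of_sameInterval (hσ : TypeOC σ) (hxz : SameInterval σ x z) (hx : x ≤ σ x)
    (hz : σ z < z) : x < z := by
  refine (hσ.le_of_sameInterval hxz hx ?_).lt_of_ne ?_
  · exact (hσ.le_or_symm_le z).resolve_left (not_le.mpr hz)
  · rintro rfl
    exact hz.not_ge hx

end TypeOC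

def SameCell (σ : Perm (Fin n)) (a b : Fin n) : Prop :=
  SameInterval σ a b ∧ (a ≤ σ a ↔ b ≤ σ b)

namespace SameCell

theorem refl (σ : Perm (Fin n)) (x : Fin n) : SameCell σ x x := ⟨.refl σ x, Iff.rfl⟩

theorem symm (h : SameCell σ x y) : SameCell σ y x := ⟨h.1.symm, h.2.symm⟩

theorem trans (h : SameCell σ x y) (h' : SameCell σ y z) : SameCell σ x z :=
  ⟨h.1.trans h'.1, h.2.trans h'.2⟩

end SameCell

open Classical in
noncomputable def cell (σ : Perm (Fin n)) (x : Fin n) : Finset (Fin n) :=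
  Finset.univ.filter (SameCell σ x)

theorem mem_cell : y ∈ cell σ x ↔ SameCell σ x y := by
  simp [cell]

theorem cell_eq_of_sameCell (h : SameCell σ x y) : cell σ y = cell σ x := by
  ext z
  simp only [mem_cell]
  exact ⟨h.trans, h.symm.trans⟩

def InOneCell (σ : Perm (Fin n)) (A : Finset (Fin n)) : Prop :=
  ∀ a ∈ A, ∀ b ∈ A, SameCell σ a b

theorem inOneCell_of_lt (hside : ∀ a ∈ A, ∀ b ∈ A, (a ≤ σ a ↔ b ≤ σ b))
    (h : ∀ a ∈ A, ∀ b ∈ A, a < b → SameInterval σ a b) : InOneCell σ A := by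
  intro a ha b hb
  refine ⟨?_, hside a ha b hb⟩
  rcases lt_trichotomy a b with hab | rfl | hab
  · exact h a ha b hb hab
  · rfl
  · exact (h b hb a ha hab).symm

noncomputable def cellReflect (σ : Perm (Fin n)) (x : Fin n) : Fin n := (cell σ x).reflect x

theorem sameCell_cellReflect (σ : Perm (Fin n)) (x : Fin n) : SameCell σ x (cellReflect σ x) :=
  mem_cell.mp (Finset.reflect_mem (mem_cell.mpr (.refl σ x)))

theorem cellReflect_involutive (σ : Perm (Fin n)) : Involutive (cellReflect σ) := fun x => by
  change (cell σ (cellReflect σ x)).reflect (cellReflect σ x) = x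
  rw [cell_eq_of_sameCell (sameCell_cellReflect σ x)]
  exact Finset.reflect_reflect (mem_cell.mpr (.refl σ x))

theorem InOneCell.strictAntiOn_cellReflect (hA : InOneCell σ A) :
    StrictAntiOn (cellReflect σ) A := by
  intro a ha b hb hab
  change (cell σ b).reflect b < (cell σ a).reflect a
  rw [cell_eq_of_sameCell (hA a ha b hb)]
  exact (cell σ a).strictAntiOn_reflect (mem_cell.mpr (.refl σ a)) (mem_cell.mpr (hA a ha b hb))
    hab

theorem InOneCell.image_cellReflect (hA : InOneCell σ A) :
    InOneCell σ (A.image (cellReflect σ)) := by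
  simp only [InOneCell, Finset.forall_mem_image]
  intro a ha b hb
  exact (sameCell_cellReflect σ a).symm.trans ((hA a ha b hb).trans (sameCell_cellReflect σ b))

/-- `rematch σ` keeps the endpoints of the arcs of `σ` and reverses, inside every cell, the
order in which they are matched. -/
noncomputable def rematch (σ : Perm (Fin n)) : Perm (Fin n) :=
  σ * (cellReflect_involutive σ).toPerm

theorem coe_rematch (σ : Perm (Fin n)) : ⇑(rematch σ) = σ ∘ cellReflect σ := rfl

theorem rematch_cellReflect (σ : Perm (Fin n)) (x : Fin n) :
    rematch σ (cellReflect σ x) = σ x := by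
  rw [coe_rematch, comp_apply, cellReflect_involutive σ x]

theorem rematch_symm_apply (σ : Perm (Fin n)) (x : Fin n) :
    (rematch σ).symm x = cellReflect σ (σ.symm x) := by
  rw [symm_apply_eq, rematch_cellReflect, apply_symm_apply]

theorem IsCut.rematch (h : IsCut σ m) : IsCut (rematch σ) m :=
  ⟨h.1, h.2.1, fun i hi => h.2.2 _ (((sameCell_cellReflect σ i).1 m h).mp hi)⟩

theorem IsCut.of_rematch (h : IsCut (Stmt5.rematch σ) m) : IsCut σ m := by
  refine ⟨h.1, h.2.1, fun i hi => ?_⟩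
  rcases lt_or_ge (σ i) i with hlt | hle
  · exact (Fin.lt_def.mp hlt).trans hi
  · have hρ : cellReflect σ i ≤ σ (cellReflect σ i) := (sameCell_cellReflect σ i).2.mp hle
    rw [← rematch_cellReflect]
    exact h.2.2 _ ((Fin.le_def.mp hρ).trans_lt (h.2.2 i hi))

theorem sameInterval_rematch_iff : SameInterval (rematch σ) x y ↔ SameInterval σ x y :=
  ⟨fun h m hm => h m hm.rematch, fun h m hm => h m hm.of_rematch⟩

namespace TypeOC

theorem le_rematch_iff (hσ : TypeOC σ) (x : Fin n) : x ≤ rematch σ x ↔ x ≤ σ x := by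
  have hx := sameCell_cellReflect σ x
  have hI : SameInterval σ x (rematch σ x) := hx.1.trans (sameInterval_apply σ _)
  refine ⟨fun h => not_lt.mp fun hlt => ?_, fun h => hσ.le_of_sameInterval hI h ?_⟩
  · have hρ : σ (cellReflect σ x) < cellReflect σ x :=
      not_le.mp fun h' => hlt.not_ge (hx.2.mpr h')
    exact (hσ.lt_of_sameInterval hI.symm (hσ.apply_le_apply_apply hρ) hlt).not_ge h
  · change σ.symm (σ (cellReflect σ x)) ≤ σ (cellReflect σ x)
    rw [symm_apply_apply]
    exact hx.2.mp h

theorem rematch_lt_iff (hσ : TypeOC σ) (x : Fin n) : rematch σ x < x ↔ σ x < x := by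
  rw [← not_le, ← not_le, hσ.le_rematch_iff]

theorem symm_rematch_le_iff (hσ : TypeOC σ) (x : Fin n) :
    (rematch σ).symm x ≤ x ↔ σ.symm x ≤ x := by
  have hy := sameCell_cellReflect σ (σ.symm x)
  have hI : SameInterval σ (cellReflect σ (σ.symm x)) x := by
    simpa using hy.1.symm.trans (sameInterval_apply σ (σ.symm x))
  rw [rematch_symm_apply]
  refine ⟨fun h => not_lt.mp fun hlt => ?_, fun h => hσ.le_of_sameInterval hI ?_ h⟩
  · have hx : x ≤ σ x := (hσ.le_or_symm_le x).resolve_right (not_le.mpr hlt)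
    have hρ : σ (cellReflect σ (σ.symm x)) < cellReflect σ (σ.symm x) :=
      not_le.mp fun h' => (hy.2.mpr h').not_gt (by rwa [apply_symm_apply])
    exact (hσ.lt_of_sameInterval hI.symm hx hρ).not_ge h
  · exact hy.2.mp (by rwa [apply_symm_apply])

theorem rematch (hσ : TypeOC σ) : TypeOC (Stmt5.rematch σ) :=
  hσ.of_iff (fun _ _ => sameInterval_rematch_iff) hσ.le_rematch_iff hσ.symm_rematch_le_iff

theorem sameCell_rematch_iff (hσ : TypeOC σ) :
    SameCell (Stmt5.rematch σ) x y ↔ SameCell σ x y := by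
  rw [SameCell, SameCell, sameInterval_rematch_iff, hσ.le_rematch_iff, hσ.le_rematch_iff]

theorem inOneCell_rematch_iff (hσ : TypeOC σ) : InOneCell (Stmt5.rematch σ) A ↔ InOneCell σ A := by
  simp only [InOneCell, hσ.sameCell_rematch_iff]

theorem cellReflect_rematch (hσ : TypeOC σ) : cellReflect (Stmt5.rematch σ) = cellReflect σ := by
  have hcell : cell (Stmt5.rematch σ) = cell σ := by
    funext x
    ext y
    rw [mem_cell, mem_cell, hσ.sameCell_rematch_iff]
  funext x
  rw [cellReflect, cellReflect, hcell]

theorem rematch_rematch (hσ : TypeOC σ) : Stmt5.rematch (Stmt5.rematch σ) = σ :=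
  Equiv.ext fun x => by rw [coe_rematch, comp_apply, hσ.cellReflect_rematch, rematch_cellReflect]

end TypeOC

theorem nu_eq_card (k : ℕ) (σ : Perm (Fin n)) :
    nu k σ = Nat.card {A : Finset (Fin n) //
      (A.card = k ∧ (∀ a ∈ A, a ≤ σ a) ∧ InOneCell σ A) ∧ StrictAntiOn σ A} := by
  refine Nat.card_congr (Equiv.subtypeEquivRight fun A => ⟨?_, ?_⟩)
  · rintro ⟨hk, hL, hnest⟩
    refine ⟨⟨hk, hL, inOneCell_of_lt (fun a ha b hb => iff_of_true (hL a ha) (hL b hb)) ?_⟩,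
      fun a ha b hb => hnest a ha b hb⟩
    exact fun a ha b hb hab => .of_le_of_le (sameInterval_apply σ a) (sameInterval_apply σ b)
      hab.le (hnest a ha b hb hab).le
  · rintro ⟨⟨hk, hL, -⟩, hanti⟩
    exact ⟨hk, hL, fun a ha b hb => hanti ha hb⟩

theorem TypeOC.cu_eq_card (hσ : TypeOC σ) (k : ℕ) :
    cu k σ = Nat.card {A : Finset (Fin n) //
      (A.card = k ∧ (∀ a ∈ A, a ≤ σ a) ∧ InOneCell σ A) ∧ StrictMonoOn σ A} := by
  refine Nat.card_congr (Equiv.subtypeEquivRight fun A => ⟨?_, ?_⟩)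
  · rintro ⟨hk, hL, hcross, hleft⟩
    refine ⟨⟨hk, hL, inOneCell_of_lt (fun a ha b hb => iff_of_true (hL a ha) (hL b hb)) ?_⟩,
      fun a ha b hb => hcross a ha b hb⟩
    exact fun a ha b hb hab => .of_le_of_le (sameInterval_apply σ a) (.refl σ b) hab.le
      (hleft b hb a ha)
  · rintro ⟨⟨hk, hL, hA⟩, hmono⟩
    refine ⟨hk, hL, fun a ha b hb => hmono ha hb, fun a ha b hb => ?_⟩
    refine hσ.le_of_sameInterval ((hA a ha b hb).1.trans (sameInterval_apply σ b)) (hL a ha) ?_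
    rw [symm_apply_apply]
    exact hL b hb

theorem nl_eq_card (k : ℕ) (σ : Perm (Fin n)) :
    nl k σ = Nat.card {B : Finset (Fin n) //
      (B.card = k ∧ (∀ b ∈ B, σ b < b) ∧ InOneCell σ B) ∧ StrictAntiOn σ B} := by
  refine Nat.card_congr (Equiv.subtypeEquivRight fun B => ⟨?_, ?_⟩)
  · rintro ⟨hk, hR, hnest⟩
    have hanti : StrictAntiOn σ B := σ.injective.strictAntiOn_iff.mpr hnest
    refine ⟨⟨hk, hR, inOneCell_of_lt ?_ ?_⟩, hanti⟩
    · exact fun a ha b hb => iff_of_false (not_le.mpr (hR a ha)) (not_le.mpr (hR b hb))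
    · exact fun a ha b hb hab => .of_le_of_le (sameInterval_apply σ a) (sameInterval_apply σ b)
        hab.le (hanti ha hb hab).le
  · rintro ⟨⟨hk, hR, -⟩, hanti⟩
    exact ⟨hk, hR, σ.injective.strictAntiOn_iff.mp hanti⟩

theorem TypeOC.cl_eq_card (hσ : TypeOC σ) (k : ℕ) :
    cl k σ = Nat.card {B : Finset (Fin n) //
      (B.card = k ∧ (∀ b ∈ B, σ b < b) ∧ InOneCell σ B) ∧ StrictMonoOn σ B} := by
  refine Nat.card_congr (Equiv.subtypeEquivRight fun B => ⟨?_, ?_⟩)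
  · rintro ⟨hk, hR, hcross, hright⟩
    refine ⟨⟨hk, hR, inOneCell_of_lt ?_ ?_⟩, σ.injective.strictMonoOn_iff.mpr hcross⟩
    · exact fun a ha b hb => iff_of_false (not_le.mpr (hR a ha)) (not_le.mpr (hR b hb))
    · exact fun a ha b hb hab => .of_le_of_le (.refl σ a) (sameInterval_apply σ b) hab.le
        (hright b hb a ha).le
  · rintro ⟨⟨hk, hR, hB⟩, hmono⟩
    refine ⟨hk, hR, σ.injective.strictMonoOn_iff.mp hmono, fun a ha b hb => ?_⟩
    exact hσ.lt_of_sameInterval ((sameInterval_apply σ a).symm.trans (hB a ha b hb).1)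
      (hσ.apply_le_apply_apply (hR a ha)) (hR b hb)

namespace TypeOC

theorem card_strictAntiOn_rematch (hσ : TypeOC σ) (k : ℕ) (p : Fin n → Prop)
    (hp : ∀ x, p (cellReflect σ x) ↔ p x) :
    Nat.card {A : Finset (Fin n) // (A.card = k ∧ (∀ a ∈ A, p a) ∧
        InOneCell (Stmt5.rematch σ) A) ∧ StrictAntiOn (Stmt5.rematch σ) A} =
      Nat.card {A : Finset (Fin n) //
        (A.card = k ∧ (∀ a ∈ A, p a) ∧ InOneCell σ A) ∧ StrictMonoOn σ A} := by
  simp only [hσ.inOneCell_rematch_iff, coe_rematch]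
  refine (cellReflect_involutive σ).card_strictAntiOn_comp_eq σ (fun A ⟨hk, hpA, hA⟩ => ⟨?_, ?_,
    hA.image_cellReflect⟩) fun A h => h.2.2.strictAntiOn_cellReflect
  · exact (Finset.card_image_of_injective _ (cellReflect_involutive σ).injective).trans hk
  · simpa only [Finset.forall_mem_image, hp] using hpA

theorem nu_rematch (hσ : TypeOC σ) (k : ℕ) : nu k (Stmt5.rematch σ) = cu k σ := by
  rw [nu_eq_card, hσ.cu_eq_card]
  simp only [hσ.le_rematch_iff]
  exact hσ.card_strictAntiOn_rematch k (fun x => x ≤ σ x) fun x =>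
    (sameCell_cellReflect σ x).2.symm

theorem nl_rematch (hσ : TypeOC σ) (k : ℕ) : nl k (Stmt5.rematch σ) = cl k σ := by
  rw [nl_eq_card, hσ.cl_eq_card]
  simp only [hσ.rematch_lt_iff]
  refine hσ.card_strictAntiOn_rematch k (fun x => σ x < x) fun x => ?_
  rw [← not_le, ← not_le, not_iff_not]
  exact (sameCell_cellReflect σ x).2.symm

theorem cu_rematch (hσ : TypeOC σ) (k : ℕ) : cu k (Stmt5.rematch σ) = nu k σ := by
  rw [← hσ.rematch.nu_rematch, hσ.rematch_rematch]

theorem cl_rematch (hσ : TypeOC σ) (k : ℕ) : cl k (Stmt5.rematch σ) = nl k σ := by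
  rw [← hσ.rematch.nl_rematch, hσ.rematch_rematch]

end TypeOC

end Stmt5

theorem stmt5_general (n : ℕ) (a b c d : ℕ → ℕ)
 :
    Nat.card {σ : Equiv.Perm (Fin n) // Stmt5.TypeOC σ ∧ ∀ k, 2 ≤ k →
      Stmt5.nu k σ = a k ∧ Stmt5.cu k σ = b k ∧
      Stmt5.nl k σ = c k ∧ Stmt5.cl k σ = d k} =
    Nat.card {σ : Equiv.Perm (Fin n) // Stmt5.TypeOC σ ∧ ∀ k, 2 ≤ k →
      Stmt5.nu k σ = b k ∧ Stmt5.cu k σ = a k ∧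
      Stmt5.nl k σ = d k ∧ Stmt5.cl k σ = c k} := by
  refine Nat.card_congr
    { toFun := fun σ => ⟨Stmt5.rematch σ, σ.2.1.rematch, fun k hk => ?_⟩
      invFun := fun σ => ⟨Stmt5.rematch σ, σ.2.1.rematch, fun k hk => ?_⟩
      left_inv := fun σ => Subtype.ext σ.2.1.rematch_rematch
      right_inv := fun σ => Subtype.ext σ.2.1.rematch_rematch }
  all_goals
    obtain ⟨hnu, hcu, hnl, hcl⟩ := σ.2.2 k hk
    rw [σ.2.1.nu_rematch, σ.2.1.cu_rematch, σ.2.1.nl_rematch, σ.2.1.cl_rematch]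
    exact ⟨hcu, hnu, hcl, hnl⟩

theorem stmt5 (n : ℕ) (a b c d : ℕ → ℕ)
    (ha : {k | a k ≠ 0}.Finite) (hb : {k | b k ≠ 0}.Finite)
    (hc : {k | c k ≠ 0}.Finite) (hd : {k | d k ≠ 0}.Finite) :
    Nat.card {σ : Equiv.Perm (Fin n) // Stmt5.TypeOC σ ∧ ∀ k, 2 ≤ k →
      Stmt5.nu k σ = a k ∧ Stmt5.cu k σ = b k ∧
      Stmt5.nl k σ = c k ∧ Stmt5.cl k σ = d k} =
    Nat.card {σ : Equiv.Perm (Fin n) // Stmt5.TypeOC σ ∧ ∀ k, 2 ≤ k →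
      Stmt5.nu k σ = b k ∧ Stmt5.cu k σ = a k ∧
      Stmt5.nl k σ = d k ∧ Stmt5.cl k σ = c k} :=
  stmt5_general n a b c d
end

section
/- For all integers n ≥ 1 and l ≥ 0, the number of partial matchings of [2n+l] with exactly n arcs (hence l fixed points) such that every opener is less than every closer and both vertex 1 and vertex 2n+l are arc endpoints (equivalently, indecomposable Type OC partial matchings with n arcs and l fixed points) equals n! · binom(2n−2+l, l). -/
open Finset

theorem Nat.card_subtype_eq_sum_card_fiberwise {α β : Type*} {p : α → Prop} (f : α → β)
    (s : Finset β) (hs : ∀ x, p x → f x ∈ s) (hfin : ∀ y ∈ s, Finite {x // p x ∧ f x = y}) :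
    Nat.card {x // p x} = ∑ y ∈ s, Nat.card {x // p x ∧ f x = y} := by
  have : ∀ y : s, Finite {x // p x ∧ f x = y} := fun y => hfin y y.2
  let e : {x // p x} ≃ Σ y : s, {x // p x ∧ f x = y} :=
    { toFun := fun x => ⟨⟨f x, hs x x.2⟩, ⟨x, x.2, rfl⟩⟩
      invFun := fun y => ⟨y.2, y.2.2.1⟩
      left_inv := fun _ => rfl
      right_inv := fun y => Sigma.subtype_ext (Subtype.ext y.2.2.2) rfl }
  rw [Nat.card_congr e, Nat.card_sigma, sum_coe_sort s fun y => Nat.card {x // p x ∧ f x = y}]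

theorem Fin.strictMono_append {α : Type*} [Preorder α] {m n : ℕ} {u : Fin m → α} {v : Fin n → α}
    (hu : StrictMono u) (hv : StrictMono v) (huv : ∀ i j, u i < v j) :
    StrictMono (Fin.append u v) := by
  intro i j hij
  induction i using Fin.addCases <;> induction j using Fin.addCases <;>
    simp only [Fin.lt_def, Fin.val_castAdd, Fin.val_natAdd] at hij <;>
    simp only [Fin.append_left, Fin.append_right, huv]
  · exact hu hij
  · omega
  · exact hv (by omega)

theorem Fin.castAdd_lt_natAdd {n : ℕ} (i j : Fin n) : Fin.castAdd n i < Fin.natAdd n j := by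
  simp only [Fin.lt_def, Fin.val_castAdd, Fin.val_natAdd]
  omega

theorem card_filter_powersetCard_Icc_mem_mem {a b k : ℕ} (hab : a < b) :
    #{E ∈ (Icc a b).powersetCard (k + 2) | a ∈ E ∧ b ∈ E} = (b - a - 1).choose k := by
  rw [← Nat.card_Ioo, ← card_powersetCard]
  symm
  refine card_nbij' (fun s => insert a (insert b s)) (fun E => (E.erase a).erase b) ?_ ?_ ?_ ?_
  · intro s hs
    simp only [coe_filter, mem_powersetCard, Set.mem_ofPred_eq, mem_coe] at hs ⊢
    have ha : a ∉ insert b s := by grind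
    have hb : b ∉ s := by grind
    refine ⟨⟨?_, ?_⟩, by simp, by simp⟩
    · grind
    · rw [card_insert_of_notMem ha, card_insert_of_notMem hb, hs.2]
  · intro E hE
    simp only [coe_filter, mem_powersetCard, Set.mem_ofPred_eq, mem_coe] at hE ⊢
    refine ⟨?_, ?_⟩
    · grind
    · rw [card_erase_of_mem (by grind), card_erase_of_mem hE.2.1, hE.1.2]
      rfl
  · intro s hs
    simp only [mem_coe, mem_powersetCard] at hs
    grind
  · intro E hE
    simp only [coe_filter, mem_powersetCard, Set.mem_ofPred_eq] at hE
    grind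

def IsMatching (M : Finset (ℕ × ℕ)) : Prop :=
  (∀ p ∈ M, p.1 < p.2) ∧
  (∀ p ∈ M, ∀ q ∈ M, p ≠ q → p.1 ≠ q.1 ∧ p.1 ≠ q.2 ∧ p.2 ≠ q.1 ∧ p.2 ≠ q.2)

def IsTypeOC (M : Finset (ℕ × ℕ)) : Prop := ∀ p ∈ M, ∀ q ∈ M, p.1 < q.2

theorem isPartialMatching_iff {N : ℕ} {M : Finset (ℕ × ℕ)} :
    IsPartialMatching N M ↔ IsMatching M ∧ Endpoints M ⊆ Icc 1 N := by
  simp only [IsPartialMatching, IsMatching, Endpoints, union_subset_iff, image_subset_iff,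
    mem_Icc]
  constructor
  · rintro ⟨hb, hd⟩
    exact ⟨⟨fun p hp => (hb p hp).2.1, hd⟩, fun p hp => by grind, fun p hp => by grind⟩
  · rintro ⟨⟨hlt, hd⟩, h1, h2⟩
    exact ⟨fun p hp => ⟨(h1 p hp).1, hlt p hp, (h2 p hp).2⟩, hd⟩

namespace IsMatching

variable {M : Finset (ℕ × ℕ)}

theorem injOn_fst (hM : IsMatching M) : Set.InjOn Prod.fst (M : Set (ℕ × ℕ)) :=
  fun p hp q hq h => by_contra fun hpq => (hM.2 p hp q hq hpq).1 h

theorem injOn_snd (hM : IsMatching M) : Set.InjOn Prod.snd (M : Set (ℕ × ℕ)) :=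
  fun p hp q hq h => by_contra fun hpq => (hM.2 p hp q hq hpq).2.2.2 h

theorem disjoint_image_fst_snd (hM : IsMatching M) :
    Disjoint (M.image Prod.fst) (M.image Prod.snd) := by
  simp only [disjoint_left, mem_image, not_exists, not_and]
  rintro _ ⟨p, hp, rfl⟩ q hq hqp
  obtain rfl | hpq := eq_or_ne p q
  · exact (hM.1 p hp).ne hqp.symm
  · exact (hM.2 p hp q hq hpq).2.1 hqp.symm

theorem card_endpoints (hM : IsMatching M) : #(Endpoints M) = 2 * #M := by
  rw [Endpoints, card_union_of_disjoint hM.disjoint_image_fst_snd,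
    card_image_of_injOn hM.injOn_fst, card_image_of_injOn hM.injOn_snd, two_mul]

end IsMatching

section ocMatching

variable {n : ℕ}

def ocMatching (e : Fin (n + n) → ℕ) (σ : Equiv.Perm (Fin n)) : Finset (ℕ × ℕ) :=
  univ.image fun k => (e (Fin.castAdd n k), e (Fin.natAdd n (σ k)))

theorem mem_ocMatching {e : Fin (n + n) → ℕ} {σ : Equiv.Perm (Fin n)} {p : ℕ × ℕ} :
    p ∈ ocMatching e σ ↔ ∃ k, (e (Fin.castAdd n k), e (Fin.natAdd n (σ k))) = p := by
  simp [ocMatching]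

theorem endpoints_ocMatching (e : Fin (n + n) → ℕ) (σ : Equiv.Perm (Fin n)) :
    Endpoints (ocMatching e σ) = univ.image e := by
  ext x
  simp only [Endpoints, ocMatching, image_image, mem_union, mem_image, mem_univ, true_and,
    Function.comp_def]
  constructor
  · rintro (⟨k, rfl⟩ | ⟨k, rfl⟩) <;> exact ⟨_, rfl⟩
  · rintro ⟨i, rfl⟩
    induction i using Fin.addCases with
    | left k => exact Or.inl ⟨k, rfl⟩
    | right k => exact Or.inr ⟨σ.symm k, by rw [σ.apply_symm_apply]⟩

theorem card_ocMatching {e : Fin (n + n) → ℕ} (he : Function.Injective e)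
    (σ : Equiv.Perm (Fin n)) : #(ocMatching e σ) = n := by
  rw [ocMatching, card_image_of_injective, card_univ, Fintype.card_fin]
  intro k m hkm
  exact Fin.castAdd_injective n n (he (congrArg Prod.fst hkm))

theorem isMatching_ocMatching {e : Fin (n + n) → ℕ} (he : StrictMono e)
    (σ : Equiv.Perm (Fin n)) : IsMatching (ocMatching e σ) := by
  refine ⟨?_, ?_⟩
  · simp only [mem_ocMatching]
    rintro _ ⟨k, rfl⟩
    exact he (Fin.castAdd_lt_natAdd _ _)
  · simp only [mem_ocMatching]
    rintro _ ⟨k, rfl⟩ _ ⟨m, rfl⟩ hkm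
    have hkm : k ≠ m := by rintro rfl; exact hkm rfl
    simp only [ne_eq, he.injective.eq_iff, Fin.castAdd_inj, Fin.natAdd_inj, σ.injective.eq_iff,
      hkm, not_false_eq_true, true_and, and_true]
    exact ⟨(Fin.castAdd_lt_natAdd _ _).ne, (Fin.castAdd_lt_natAdd _ _).ne'⟩

theorem isTypeOC_ocMatching {e : Fin (n + n) → ℕ} (he : StrictMono e)
    (σ : Equiv.Perm (Fin n)) : IsTypeOC (ocMatching e σ) := by
  simp only [IsTypeOC, mem_ocMatching]
  rintro _ ⟨k, rfl⟩ _ ⟨m, rfl⟩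
  exact he (Fin.castAdd_lt_natAdd _ _)

theorem ocMatching_injective {e : Fin (n + n) → ℕ} (he : Function.Injective e) :
    Function.Injective (ocMatching e) := by
  intro σ τ hστ
  ext k : 1
  have hk : (e (Fin.castAdd n k), e (Fin.natAdd n (σ k))) ∈ ocMatching e τ :=
    hστ ▸ mem_ocMatching.2 ⟨k, rfl⟩
  obtain ⟨m, hm⟩ := mem_ocMatching.1 hk
  simp only [Prod.mk.injEq, he.eq_iff, Fin.castAdd_inj, Fin.natAdd_inj] at hm
  obtain ⟨rfl, hm⟩ := hm
  exact hm.symm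

end ocMatching

theorem exists_ocMatching_eq {n : ℕ} {M : Finset (ℕ × ℕ)} (hM : IsMatching M) (hOC : IsTypeOC M)
    (hE : #(Endpoints M) = n + n) : ∃ σ, ocMatching ((Endpoints M).orderEmbOfFin hE) σ = M := by
  have hMn : #M = n := by have := hM.card_endpoints; omega
  set O := M.image Prod.fst
  set C := M.image Prod.snd
  have hO : #O = n := by rw [card_image_of_injOn hM.injOn_fst, hMn]
  have hC : #C = n := by rw [card_image_of_injOn hM.injOn_snd, hMn]
  set u := O.orderEmbOfFin hO
  set v := C.orderEmbOfFin hC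
  -- the openers are the `n` smallest endpoints, the closers the `n` largest
  have he : ⇑((Endpoints M).orderEmbOfFin hE) = Fin.append u v := by
    refine (orderEmbOfFin_unique hE (fun i => ?_) (Fin.strictMono_append u.strictMono
      v.strictMono fun i j => ?_)).symm
    · induction i using Fin.addCases <;>
        simp only [Fin.append_left, Fin.append_right, Endpoints, mem_union, orderEmbOfFin_mem,
          true_or, or_true, O, C, u, v]
    · obtain ⟨p, hp, hpi⟩ := mem_image.1 (O.orderEmbOfFin_mem hO i)
      obtain ⟨q, hq, hqj⟩ := mem_image.1 (C.orderEmbOfFin_mem hC j)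
      exact hpi ▸ hqj ▸ hOC p hp q hq
  have hclosing : ∀ k, ∃ m, (u k, v m) ∈ M := by
    intro k
    obtain ⟨p, hp, hpk⟩ := mem_image.1 (O.orderEmbOfFin_mem hO k)
    have : p.2 ∈ Set.range v := by
      rw [range_orderEmbOfFin]
      exact mem_image_of_mem _ hp
    obtain ⟨m, hm⟩ := this
    exact ⟨m, by rwa [hm, ← hpk]⟩
  choose f hf using hclosing
  have hf_inj : Function.Injective f := fun k m hkm =>
    u.injective (congrArg Prod.fst (hM.injOn_snd (hf k) (hf m) (by simp [hkm])))
  refine ⟨Equiv.ofBijective f (Finite.injective_iff_bijective.1 hf_inj),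
    eq_of_subset_of_card_le ?_ ?_⟩
  · intro p hp
    obtain ⟨k, rfl⟩ := mem_ocMatching.1 hp
    simpa only [he, Fin.append_left, Fin.append_right, Equiv.ofBijective_apply] using hf k
  · rw [hMn, card_ocMatching (orderEmbOfFin _ hE).injective]

noncomputable def typeOCMatchingEquiv {n : ℕ} {E : Finset ℕ} (hE : #E = n + n) :
    Equiv.Perm (Fin n) ≃ {M // IsMatching M ∧ IsTypeOC M ∧ Endpoints M = E} :=
  let e := E.orderEmbOfFin hE
  Equiv.ofBijective
    (fun σ => ⟨ocMatching e σ, isMatching_ocMatching e.strictMono σ,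
      isTypeOC_ocMatching e.strictMono σ, by rw [endpoints_ocMatching, image_orderEmbOfFin_univ]⟩)
    ⟨fun σ τ h => ocMatching_injective e.injective (congrArg Subtype.val h), by
      rintro ⟨M, hM, hOC, rfl⟩
      obtain ⟨σ, hσ⟩ := exists_ocMatching_eq hM hOC hE
      exact ⟨σ, Subtype.ext hσ⟩⟩

theorem card_typeOCMatchings {n : ℕ} {E : Finset ℕ} (hE : #E = n + n) :
    Nat.card {M // IsMatching M ∧ IsTypeOC M ∧ Endpoints M = E} = n.factorial := by
  rw [← Nat.card_congr (typeOCMatchingEquiv hE), Nat.card_perm, Nat.card_fin]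

def IsIndecomposableOC (N n : ℕ) (M : Finset (ℕ × ℕ)) : Prop :=
  IsPartialMatching N M ∧ #M = n ∧ IsTypeOC M ∧ 1 ∈ Endpoints M ∧ N ∈ Endpoints M

theorem isIndecomposableOC_iff {N n : ℕ} {M : Finset (ℕ × ℕ)} :
    IsIndecomposableOC N n M ↔ IsMatching M ∧ IsTypeOC M ∧
      Endpoints M ∈ {E ∈ (Icc 1 N).powersetCard (n + n) | 1 ∈ E ∧ N ∈ E} := by
  simp only [IsIndecomposableOC, isPartialMatching_iff, mem_filter, mem_powersetCard]
  constructor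
  · rintro ⟨⟨hM, hsub⟩, hcard, hOC, h1, hN⟩
    exact ⟨hM, hOC, ⟨hsub, by rw [hM.card_endpoints, hcard, two_mul]⟩, h1, hN⟩
  · rintro ⟨hM, hOC, ⟨hsub, hcard⟩, h1, hN⟩
    exact ⟨⟨hM, hsub⟩, by rw [hM.card_endpoints] at hcard; omega, hOC, h1, hN⟩

theorem card_isIndecomposableOC (N n : ℕ) :
    Nat.card {M // IsIndecomposableOC N n M} =
      #{E ∈ (Icc 1 N).powersetCard (n + n) | 1 ∈ E ∧ N ∈ E} * n.factorial := by
  set S := {E ∈ (Icc 1 N).powersetCard (n + n) | 1 ∈ E ∧ N ∈ E}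
  have hcard : ∀ E ∈ S, #E = n + n := fun E hE => (mem_powersetCard.1 (mem_filter.1 hE).1).2
  have hfiber : ∀ E ∈ S, {M // IsIndecomposableOC N n M ∧ Endpoints M = E} ≃
      {M // IsMatching M ∧ IsTypeOC M ∧ Endpoints M = E} := fun E hE =>
    Equiv.subtypeEquivRight fun M => by
      rw [isIndecomposableOC_iff]
      constructor
      · exact fun ⟨⟨hM, hOC, _⟩, hME⟩ => ⟨hM, hOC, hME⟩
      · rintro ⟨hM, hOC, rfl⟩
        exact ⟨⟨hM, hOC, hE⟩, rfl⟩
  rw [Nat.card_subtype_eq_sum_card_fiberwise Endpoints S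
      (fun M hM => (isIndecomposableOC_iff.1 hM).2.2)
      (fun E hE => .of_equiv _ ((typeOCMatchingEquiv (hcard E hE)).trans (hfiber E hE).symm)),
    ← smul_eq_mul, ← sum_const]
  refine sum_congr rfl fun E hE => ?_
  rw [Nat.card_congr (hfiber E hE), card_typeOCMatchings (hcard E hE)]

theorem stmt6 (n l : ℕ) (hn : 1 ≤ n) :
    Nat.card {M : Finset (ℕ × ℕ) // IsPartialMatching (2 * n + l) M ∧
      M.card = n ∧
      (∀ p ∈ M, ∀ q ∈ M, p.1 < q.2) ∧
      1 ∈ Endpoints M ∧ (2 * n + l) ∈ Endpoints M} =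
    n.factorial * (2 * n - 2 + l).choose l := by
  change Nat.card {M // IsIndecomposableOC (2 * n + l) n M} = _
  rw [card_isIndecomposableOC, show n + n = 2 * n - 2 + 2 by omega,
    card_filter_powersetCard_Icc_mem_mem (by omega),
    show 2 * n + l - 1 - 1 = 2 * n - 2 + l by omega, Nat.choose_symm_add, mul_comm]
end

section
/- For all integers n, k, j ≥ 1 and l ≥ 0, the number of partial matchings of [2(n+k+j)+l] with exactly n+k+j arcs (hence l fixed points) such that vertices 1 and 2(n+k+j)+l are arc endpoints and the arc endpoints, listed in increasing order, consist of n+k openers, then k closers, then j openers, then n+j closers (Type OCOC with l interior fixed points) equals n! · binom(n+k, k) · k! · binom(n+j, j) · j! · binom(2(n+k+j−1)+l, l). -/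
/-- The (1-based) rank of `i` inside the finite set `E`. -/
def rankIn (E : Finset ℕ) (i : ℕ) : ℕ := (E.filter fun x => x ≤ i).card


/-!
A matching of this type is determined by two independent pieces of data. The first is its set `E`
of `2m` endpoints (`m = n + k + j`); it contains `1` and `N = 2m + l`, so it is fixed by its `l`
complementary fixed points in `[2, N - 1]`, which gives `binom(2(m - 1) + l, l)`. The second is
what remains after relabelling `E` increasingly by `Fin (2m)`: a perfect matching with prescribed
openers, i.e. a bijection sending every closer to a smaller opener. For the pattern
`O^{n+k} C^k O^j C^{n+j}` the `k` middle closers go injectively to the first `n + k` openers, and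
the last `n + j` closers biject onto the remaining openers: `(n + k)! / n! · (n + j)!` choices.
-/

open Finset

namespace IsPartialMatching

variable {N : ℕ} {M : Finset (ℕ × ℕ)}

lemma fst_injOn (hM : IsPartialMatching N M) : Set.InjOn Prod.fst (M : Set (ℕ × ℕ)) :=
  fun p hp q hq h => by_contra fun hpq => (hM.2 p hp q hq hpq).1 h

lemma snd_injOn (hM : IsPartialMatching N M) : Set.InjOn Prod.snd (M : Set (ℕ × ℕ)) :=
  fun p hp q hq h => by_contra fun hpq => (hM.2 p hp q hq hpq).2.2.2 h

lemma fst_ne_snd (hM : IsPartialMatching N M) {p q : ℕ × ℕ} (hp : p ∈ M) (hq : q ∈ M) :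
    p.1 ≠ q.2 := by
  by_cases hpq : p = q
  · exact hpq ▸ (hM.1 p hp).2.1.ne
  · exact (hM.2 p hp q hq hpq).2.1

lemma card_endpoints (hM : IsPartialMatching N M) : (Endpoints M).card = 2 * M.card := by
  have hdisj : Disjoint (M.image Prod.fst) (M.image Prod.snd) := by
    simp only [disjoint_left, mem_image]
    rintro _ ⟨p, hp, rfl⟩ ⟨q, hq, hpq⟩
    exact hM.fst_ne_snd hp hq hpq.symm
  rw [Endpoints, card_union_of_disjoint hdisj, card_image_of_injOn hM.fst_injOn,
    card_image_of_injOn hM.snd_injOn, two_mul]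

lemma endpoints_subset (hM : IsPartialMatching N M) : Endpoints M ⊆ Icc 1 N := by
  intro e he
  rcases mem_union.1 he with h | h <;> obtain ⟨p, hp, rfl⟩ := mem_image.1 h <;>
    have := hM.1 p hp <;> simp only [mem_Icc] <;> omega

end IsPartialMatching

lemma rankIn_orderEmbOfFin {E : Finset ℕ} {s : ℕ} (hE : E.card = s) (r : Fin s) :
    rankIn E (E.orderEmbOfFin hE r) = (r : ℕ) + 1 := by
  have : E.filter (· ≤ E.orderEmbOfFin hE r) = (Iic r).image (E.orderEmbOfFin hE) := by
    ext x
    constructor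
    · intro hx
      rw [mem_filter] at hx
      obtain ⟨a, rfl⟩ : x ∈ Set.range (E.orderEmbOfFin hE) := by
        simpa using hx.1
      simpa using hx.2
    · simp only [mem_image, mem_Iic, mem_filter]
      rintro ⟨a, ha, rfl⟩
      exact ⟨orderEmbOfFin_mem E hE a, by simpa using ha⟩
  rw [rankIn, this, card_image_of_injective _ (E.orderEmbOfFin hE).injective, Fin.card_Iic]

theorem Nat.card_equiv_extend {α β : Type*} [Finite α] (s : Set α) (g : s ↪ β)
    (h : Nonempty (α ≃ β)) :
    Nat.card {φ : α ≃ β // ∀ x : s, φ x = g x} = (Nat.card ↥sᶜ).factorial := by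
  classical
  obtain ⟨φ₀, hφ₀⟩ := Cardinal.extend_function_finite g h
  -- `φ ↦ φ₀⁻¹ ∘ φ` identifies the extensions of `g` with the permutations fixing `s` pointwise
  have e : {φ : α ≃ β // ∀ x : s, φ x = g x} ≃ {π : Equiv.Perm α // ∀ a, ¬a ∉ s → π a = a} :=
    (Equiv.equivCongr (Equiv.refl α) φ₀.symm).subtypeEquiv fun φ => by
      refine ⟨fun hφ a ha => ?_, fun hπ x => ?_⟩
      · simp [hφ ⟨a, not_not.1 ha⟩, ← hφ₀ ⟨a, not_not.1 ha⟩]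
      · rw [← hφ₀ x, ← φ₀.symm_apply_eq]
        simpa using hπ x (not_not.2 x.2)
  rw [Nat.card_congr (e.trans (Equiv.Perm.subtypeEquivSubtypePerm _).symm), Nat.card_perm]
  rfl

theorem Nat.card_equiv_mapsTo {α β : Type*} [Finite α] [Finite β] (s : Set α) (t : Set β)
    (h : Nonempty (α ≃ β)) :
    Nat.card {φ : α ≃ β // ∀ x ∈ s, φ x ∈ t} =
      (Nat.card t).descFactorial (Nat.card s) * (Nat.card ↥sᶜ).factorial := by
  classical
  have := Fintype.ofFinite α
  have := Fintype.ofFinite β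
  let restrict : {φ : α ≃ β // ∀ x ∈ s, φ x ∈ t} → (s ↪ t) := fun φ =>
    ⟨fun x => ⟨φ.1 x, φ.2 x x.2⟩,
      fun x y hxy => Subtype.ext (φ.1.injective (congrArg Subtype.val hxy))⟩
  have fiber (g : s ↪ t) : Nat.card {φ // restrict φ = g} = (Nat.card ↥sᶜ).factorial := by
    rw [← Nat.card_equiv_extend s (g.trans (Function.Embedding.subtype t)) h]
    exact Nat.card_congr
      { toFun := fun φ => ⟨φ.1.1, fun x => congrArg Subtype.val (DFunLike.congr_fun φ.2 x)⟩
        invFun := fun φ => ⟨⟨φ.1, fun x hx => (φ.2 ⟨x, hx⟩).symm ▸ (g ⟨x, hx⟩).2⟩,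
          Function.Embedding.ext fun x => Subtype.ext (φ.2 x)⟩
        left_inv := fun _ => rfl
        right_inv := fun _ => rfl }
  rw [← Nat.card_congr (Equiv.sigmaFiberEquiv restrict), Nat.card_sigma]
  simp only [fiber, Finset.sum_const, Finset.card_univ, smul_eq_mul]
  rw [← Nat.card_eq_fintype_card, Nat.card_eq_fintype_card, Fintype.card_embedding_eq]
  simp [Nat.card_eq_fintype_card]

lemma Fin.natCard_eq_sub_of_iff {N a b : ℕ} (hb : b ≤ N) {p : Fin N → Prop}
    (t : Set {r // p r}) (ht : ∀ r, (∃ h : p r, ⟨r, h⟩ ∈ t) ↔ a ≤ (r : ℕ) ∧ (r : ℕ) < b) :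
    Nat.card t = b - a := by
  rw [← Nat.card_Ico a b, ← Fintype.card_coe, ← Nat.card_eq_fintype_card]
  exact Nat.card_congr <| (Equiv.subtypeSubtypeEquivSubtypeExists _ _).trans
    { toFun := fun r => ⟨r.1, mem_Ico.2 ((ht _).1 r.2)⟩
      invFun := fun i => ⟨⟨i, by have := mem_Ico.1 i.2; omega⟩, (ht _).2 (mem_Ico.1 i.2)⟩
      left_inv := fun _ => rfl
      right_inv := fun _ => rfl }

/-- A perfect matching of `Fin s` with opener set `O`, recorded as the bijection sending each
closer to its (smaller) partner. -/
def Pairing {s : ℕ} (O : Finset (Fin s)) : Type :=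
  {φ : {c // c ∉ O} ≃ O // ∀ c, (φ c : Fin s) < c}

namespace Pairing

variable {s : ℕ} {O : Finset (Fin s)} (e : Fin s ↪o ℕ)

def arcs (φ : Pairing O) : Finset (ℕ × ℕ) :=
  univ.image fun c => (e (φ.1 c), e c)

variable {e} (φ : Pairing O)

lemma mem_arcs {p : ℕ × ℕ} : p ∈ φ.arcs e ↔ ∃ c, (e (φ.1 c), e c) = p := by
  simp [arcs]

lemma isPartialMatching_arcs {N : ℕ} (he : ∀ r, e r ∈ Icc 1 N) :
    IsPartialMatching N (φ.arcs e) := by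
  simp only [IsPartialMatching, mem_arcs]
  constructor
  · rintro _ ⟨c, rfl⟩
    exact ⟨(mem_Icc.1 (he _)).1, e.lt_iff_lt.2 (φ.2 c), (mem_Icc.1 (he c)).2⟩
  · rintro _ ⟨c, rfl⟩ _ ⟨c', rfl⟩ hne
    have hcc : c ≠ c' := fun h => hne (h ▸ rfl)
    simp only [ne_eq, EmbeddingLike.apply_eq_iff_eq]
    exact ⟨fun h => hcc (φ.1.injective (Subtype.ext h)), fun h => c'.2 (h ▸ (φ.1 c).2),
      fun h => c.2 (h ▸ (φ.1 c').2), fun h => hcc (Subtype.ext h)⟩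

lemma card_arcs : (φ.arcs e).card = Fintype.card {c // c ∉ O} := by
  refine card_image_of_injective _ fun c c' h => Subtype.ext (e.injective ?_)
  exact congrArg Prod.snd h

lemma endpoints_arcs : Endpoints (φ.arcs e) = univ.image e := by
  ext x
  simp only [Endpoints, mem_union, mem_image, mem_arcs, mem_univ, true_and]
  constructor
  · rintro (⟨_, ⟨c, rfl⟩, rfl⟩ | ⟨_, ⟨c, rfl⟩, rfl⟩) <;> exact ⟨_, rfl⟩
  · rintro ⟨r, rfl⟩
    by_cases hr : r ∈ O
    · exact .inl ⟨_, ⟨φ.1.symm ⟨r, hr⟩, rfl⟩, by simp⟩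
    · exact .inr ⟨_, ⟨⟨r, hr⟩, rfl⟩, rfl⟩

lemma image_fst_arcs : (φ.arcs e).image Prod.fst = O.image e := by
  ext x
  simp only [mem_image, mem_arcs]
  constructor
  · rintro ⟨_, ⟨c, rfl⟩, rfl⟩
    exact ⟨_, (φ.1 c).2, rfl⟩
  · rintro ⟨r, hr, rfl⟩
    exact ⟨_, ⟨φ.1.symm ⟨r, hr⟩, rfl⟩, by simp⟩

variable (e) in
lemma arcs_injective : Function.Injective (arcs e : Pairing O → Finset (ℕ × ℕ)) := by
  intro φ ψ h
  refine Subtype.ext (Equiv.ext fun c => ?_)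
  obtain ⟨c', hc'⟩ := ψ.mem_arcs.1 (h ▸ φ.mem_arcs.2 ⟨c, rfl⟩)
  obtain rfl : c' = c := Subtype.ext (e.injective (congrArg Prod.snd hc'))
  exact Subtype.ext (e.injective (congrArg Prod.fst hc')).symm

lemma exists_arcs_eq {N : ℕ} {M : Finset (ℕ × ℕ)} (hM : IsPartialMatching N M)
    (hE : Endpoints M = univ.image e) (hO : M.image Prod.fst = O.image e) :
    ∃ φ : Pairing O, φ.arcs e = M := by
  have partner (c : {c // c ∉ O}) : ∃ o : O, (e o, e c) ∈ M := by
    have hc : e c ∈ Endpoints M := hE ▸ mem_image_of_mem e (mem_univ _)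
    have hnf : e c ∉ M.image Prod.fst := by simpa [hO] using c.2
    obtain ⟨p, hp, hpc⟩ := mem_image.1 ((mem_union.1 hc).resolve_left hnf)
    obtain ⟨o, ho, hpo⟩ := mem_image.1 (hO ▸ mem_image_of_mem Prod.fst hp)
    exact ⟨⟨o, ho⟩, by rw [hpo, ← hpc]; exact hp⟩
  choose ψ hψ using partner
  have hψ_inj : Function.Injective ψ := fun c c' h => by
    have := hM.fst_injOn (hψ c) (hψ c') (by simp [h])
    exact Subtype.ext (e.injective (congrArg Prod.snd this))
  have hO_card : O.card = M.card := by
    rw [← card_image_of_injective O e.injective, ← hO, card_image_of_injOn hM.fst_injOn]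
  have hcompl_card : Fintype.card {c // c ∉ O} = M.card := by
    have hs : s = 2 * M.card := by
      rw [← hM.card_endpoints, hE, card_image_of_injective _ e.injective, card_univ,
        Fintype.card_fin]
    rw [Fintype.card_subtype_compl, Fintype.card_fin, Fintype.card_coe, hO_card]
    omega
  have hψ_bij : Function.Bijective ψ := by
    rw [Fintype.bijective_iff_injective_and_card, hcompl_card, Fintype.card_coe, hO_card]
    exact ⟨hψ_inj, rfl⟩
  let φ : Pairing O :=
    ⟨Equiv.ofBijective ψ hψ_bij, fun c => e.lt_iff_lt.1 (hM.1 _ (hψ c)).2.1⟩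
  refine ⟨φ, eq_of_subset_of_card_le ?_ (by rw [card_arcs, hcompl_card])⟩
  intro p hp
  obtain ⟨c, rfl⟩ := φ.mem_arcs.1 hp
  exact hψ c

end Pairing

def IsPatternMatching (N m : ℕ) (P : ℕ → Prop) (M : Finset (ℕ × ℕ)) : Prop :=
  IsPartialMatching N M ∧ M.card = m ∧ 1 ∈ Endpoints M ∧ N ∈ Endpoints M ∧
    ∀ i ∈ Endpoints M, (i ∈ M.image Prod.fst ↔ P (rankIn (Endpoints M) i))

-- `Fin` ranks are 0-based, whereas `rankIn` counts from 1.
def openerRanks (m : ℕ) (P : ℕ → Prop) [DecidablePred P] : Finset (Fin (2 * m)) :=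
  univ.filter fun r => P (r + 1)

section PatternMatching

variable {N m : ℕ} {P : ℕ → Prop} [DecidablePred P]

lemma pattern_iff_image_fst_eq {M : Finset (ℕ × ℕ)} {E : Finset ℕ} (hE : E.card = 2 * m)
    (hEM : Endpoints M = E) :
    (∀ i ∈ Endpoints M, (i ∈ M.image Prod.fst ↔ P (rankIn (Endpoints M) i))) ↔
      M.image Prod.fst = (openerRanks m P).image (E.orderEmbOfFin hE) := by
  set e := E.orderEmbOfFin hE
  subst hEM
  have hrange (i : ℕ) (hi : i ∈ Endpoints M) : ∃ r, e r = i := by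
    have : i ∈ Set.range e := by rw [range_orderEmbOfFin]; exact hi
    exact this
  have hopener (r : Fin (2 * m)) : e r ∈ (openerRanks m P).image e ↔ P (r + 1) := by
    simp [openerRanks]
  rw [Finset.ext_iff]
  constructor
  · intro h x
    by_cases hx : x ∈ Endpoints M
    · obtain ⟨r, rfl⟩ := hrange x hx
      rw [h _ hx, rankIn_orderEmbOfFin, hopener]
    · have hfst : x ∉ M.image Prod.fst := fun h' => hx (subset_union_left h')
      have himg : x ∉ (openerRanks m P).image e := by
        simp only [mem_image, not_exists, not_and]
        exact fun r _ hr => hx (hr ▸ orderEmbOfFin_mem _ hE r)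
      simp only [hfst, himg]
  · intro h i hi
    obtain ⟨r, rfl⟩ := hrange i hi
    rw [h, hopener, rankIn_orderEmbOfFin]

lemma isPatternMatching_arcs {E : Finset ℕ} (hEN : E ⊆ Icc 1 N) (hE : E.card = 2 * m)
    (h1 : 1 ∈ E) (hN : N ∈ E) (φ : Pairing (openerRanks m P)) :
    IsPatternMatching N m P (φ.arcs (E.orderEmbOfFin hE)) := by
  have hEM : Endpoints (φ.arcs (E.orderEmbOfFin hE)) = E := by
    rw [φ.endpoints_arcs, image_orderEmbOfFin_univ]
  have hcard : Fintype.card {c // c ∉ openerRanks m P} = m := by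
    have := Fintype.card_congr φ.1
    rw [Fintype.card_subtype_compl, Fintype.card_coe, Fintype.card_fin] at this ⊢
    omega
  refine ⟨φ.isPartialMatching_arcs fun r => hEN (orderEmbOfFin_mem _ hE r),
    φ.card_arcs.trans hcard, by rw [hEM]; exact h1, by rw [hEM]; exact hN, ?_⟩
  rw [pattern_iff_image_fst_eq hE hEM, φ.image_fst_arcs]

variable (N m P) in
theorem card_isPatternMatching :
    Nat.card {M // IsPatternMatching N m P M} =
      Nat.card {E : Finset ℕ // E ⊆ Icc 1 N ∧ E.card = 2 * m ∧ 1 ∈ E ∧ N ∈ E} *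
        Nat.card (Pairing (openerRanks m P)) := by
  rw [← Nat.card_prod]
  refine (Nat.card_eq_of_bijective (fun x => ⟨_, isPatternMatching_arcs x.1.2.1 x.1.2.2.1
    x.1.2.2.2.1 x.1.2.2.2.2 x.2⟩) ⟨?_, ?_⟩).symm
  · rintro ⟨⟨E, hE⟩, φ⟩ ⟨⟨E', hE'⟩, φ'⟩ h
    have h := congrArg Subtype.val h
    obtain rfl : E = E' := by
      simpa only [Pairing.endpoints_arcs, image_orderEmbOfFin_univ] using
        congrArg Endpoints h
    obtain rfl := Pairing.arcs_injective _ h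
    rfl
  · rintro ⟨M, hM, hcard, h1, hN, hpat⟩
    have hE : (Endpoints M).card = 2 * m := by rw [hM.card_endpoints, hcard]
    obtain ⟨φ, hφ⟩ := Pairing.exists_arcs_eq hM (image_orderEmbOfFin_univ _ hE).symm
      ((pattern_iff_image_fst_eq hE rfl).1 hpat)
    exact ⟨⟨⟨Endpoints M, hM.endpoints_subset, hE, h1, hN⟩, φ⟩, Subtype.ext hφ⟩

end PatternMatching

theorem card_endpointSets (m l : ℕ) (hm : 1 ≤ m) :
    Nat.card {E : Finset ℕ // E ⊆ Icc 1 (2 * m + l) ∧ E.card = 2 * m ∧ 1 ∈ E ∧ 2 * m + l ∈ E} =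
      (2 * (m - 1) + l).choose l := by
  set N := 2 * m + l
  have hsub : Icc 2 (N - 1) ⊆ Icc 1 N := Icc_subset_Icc (by omega) (by omega)
  let compl : {E : Finset ℕ // E ⊆ Icc 1 N ∧ E.card = 2 * m ∧ 1 ∈ E ∧ N ∈ E} ≃
      (Icc 2 (N - 1)).powersetCard l :=
    { toFun := fun E => ⟨Icc 1 N \ E.1, by
        obtain ⟨hEN, hcard, h1, hN⟩ := E.2
        refine mem_powersetCard.2 ⟨fun x hx => ?_, ?_⟩
        · obtain ⟨hx, hxE⟩ := mem_sdiff.1 hx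
          have : x ≠ 1 := fun h => hxE (h ▸ h1)
          have : x ≠ N := fun h => hxE (h ▸ hN)
          simp only [mem_Icc] at hx ⊢
          omega
        · rw [card_sdiff_of_subset hEN, Nat.card_Icc, hcard]
          omega⟩
      invFun := fun F => ⟨Icc 1 N \ F.1, by
        obtain ⟨hF, hcard⟩ := mem_powersetCard.1 F.2
        have h1 : 1 ∉ F.1 := fun h => by simpa using hF h
        have hN : N ∉ F.1 := fun h => by have := mem_Icc.1 (hF h); omega
        refine ⟨sdiff_subset, ?_, mem_sdiff.2 ⟨by simp; omega, h1⟩,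
          mem_sdiff.2 ⟨by simp; omega, hN⟩⟩
        rw [card_sdiff_of_subset (hF.trans hsub), Nat.card_Icc, hcard]
        omega⟩
      left_inv := fun E => Subtype.ext (Finset.sdiff_sdiff_eq_self E.2.1)
      right_inv := fun F =>
        Subtype.ext (Finset.sdiff_sdiff_eq_self ((mem_powersetCard.1 F.2).1.trans hsub)) }
  rw [Nat.card_congr compl, Nat.card_eq_fintype_card, Fintype.card_coe, card_powersetCard,
    Nat.card_Icc]
  congr 1
  omega

def IsOCOCOpenerRank (n k j r : ℕ) : Prop :=
  r ≤ n + k ∨ (n + 2 * k + 1 ≤ r ∧ r ≤ n + 2 * k + j)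

instance (n k j : ℕ) : DecidablePred (IsOCOCOpenerRank n k j) :=
  fun _ => inferInstanceAs (Decidable (_ ∨ _))

lemma mem_openerRanks_ococ {n k j : ℕ} (r : Fin (2 * (n + k + j))) :
    r ∈ openerRanks (n + k + j) (IsOCOCOpenerRank n k j) ↔
      (r : ℕ) < n + k ∨ (n + 2 * k ≤ r ∧ (r : ℕ) < n + 2 * k + j) := by
  simp only [openerRanks, mem_filter_univ]
  unfold IsOCOCOpenerRank
  omega

theorem card_pairing_ococ (n k j : ℕ) :
    Nat.card (Pairing (openerRanks (n + k + j) (IsOCOCOpenerRank n k j))) =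
      (n + k).descFactorial k * (n + j).factorial := by
  set O := openerRanks (n + k + j) (IsOCOCOpenerRank n k j)
  have hO : ∀ r, r ∈ O ↔ _ := mem_openerRanks_ococ
  let middle : Set {c // c ∉ O} := {c | (c : ℕ) < n + 2 * k}
  let first : Set O := {o | (o : ℕ) < n + k}
  -- middle closers precede the second opener block, last-block closers follow all openers
  have hpair : ∀ φ : {c // c ∉ O} ≃ O,
      (∀ c, (φ c : Fin (2 * (n + k + j))) < c) ↔ ∀ c ∈ middle, φ c ∈ first := fun φ =>
    forall_congr' fun c => by
      have hc := (hO c).not.1 c.2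
      have ho := (hO _).1 (φ c).2
      simp only [middle, first, Set.mem_ofPred_eq, Fin.lt_def]
      omega
  have card_first : Nat.card first = n + k :=
    Fin.natCard_eq_sub_of_iff (a := 0) (b := n + k) (by omega) first fun r => by
      simp only [first, Set.mem_ofPred_eq, exists_prop, hO]; omega
  have card_first_compl : Nat.card ↥firstᶜ = j :=
    (Fin.natCard_eq_sub_of_iff (a := n + 2 * k) (b := n + 2 * k + j) (by omega) _ fun r => by
      simp only [first, Set.mem_compl_iff, Set.mem_ofPred_eq, exists_prop, hO]; omega).trans
      (by omega)
  have card_middle : Nat.card middle = k :=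
    (Fin.natCard_eq_sub_of_iff (a := n + k) (b := n + 2 * k) (by omega) middle fun r => by
      simp only [middle, Set.mem_ofPred_eq, exists_prop, hO]; omega).trans (by omega)
  have card_middle_compl : Nat.card ↥middleᶜ = n + j :=
    (Fin.natCard_eq_sub_of_iff (a := n + 2 * k + j) (b := 2 * (n + k + j)) le_rfl _ fun r => by
      simp only [middle, Set.mem_compl_iff, Set.mem_ofPred_eq, exists_prop, hO]; omega).trans
      (by omega)
  have hequiv : Nonempty ({c // c ∉ O} ≃ O) := by
    rw [← Finite.card_eq, ← Nat.card_congr (Equiv.Set.sumCompl middle),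
      ← Nat.card_congr (Equiv.Set.sumCompl first), Nat.card_sum, Nat.card_sum, card_first,
      card_first_compl, card_middle, card_middle_compl]
    omega
  rw [Pairing, Nat.card_congr (Equiv.subtypeEquivRight hpair),
    Nat.card_equiv_mapsTo middle first hequiv, card_first, card_middle, card_middle_compl]

theorem stmt7_general (n k j l : ℕ) (hn : 1 ≤ n) :
    Nat.card {M : Finset (ℕ × ℕ) //
      IsPartialMatching (2 * (n + k + j) + l) M ∧
      M.card = n + k + j ∧
      1 ∈ Endpoints M ∧ (2 * (n + k + j) + l) ∈ Endpoints M ∧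
      ∀ i ∈ Endpoints M, (i ∈ M.image Prod.fst ↔
        (rankIn (Endpoints M) i ≤ n + k ∨
          (n + 2 * k + 1 ≤ rankIn (Endpoints M) i ∧
            rankIn (Endpoints M) i ≤ n + 2 * k + j)))} =
    n.factorial * ((n + k).choose k) * k.factorial * ((n + j).choose j) * j.factorial *
      ((2 * (n + k + j - 1) + l).choose l) := by
  refine (card_isPatternMatching _ _ (IsOCOCOpenerRank n k j)).trans ?_
  rw [card_endpointSets _ _ (by omega), card_pairing_ococ,
    Nat.descFactorial_eq_factorial_mul_choose, ← Nat.add_choose_mul_factorial_mul_factorial n j]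
  ring

theorem stmt7 (n k j l : ℕ) (hn : 1 ≤ n) (hk : 1 ≤ k) (hj : 1 ≤ j) :
    Nat.card {M : Finset (ℕ × ℕ) //
      IsPartialMatching (2 * (n + k + j) + l) M ∧
      M.card = n + k + j ∧
      1 ∈ Endpoints M ∧ (2 * (n + k + j) + l) ∈ Endpoints M ∧
      ∀ i ∈ Endpoints M, (i ∈ M.image Prod.fst ↔
        (rankIn (Endpoints M) i ≤ n + k ∨
          (n + 2 * k + 1 ≤ rankIn (Endpoints M) i ∧
            rankIn (Endpoints M) i ≤ n + 2 * k + j)))} =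
    n.factorial * ((n + k).choose k) * k.factorial * ((n + j).choose j) * j.factorial *
      ((2 * (n + k + j - 1) + l).choose l) :=
  stmt7_general n k j l hn
end
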